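/- arXiv:1411.2703 — 9 statements merged into one kernel-verified Lean document; each statement's English description precedes it below -/
import Mathlib

section
/- Let I ⊆ ℝ be an open interval, U : I → ℂ a smooth function, and let ψ, φ : I → ℂ be smooth functions satisfying −ψ''(x) + U(x)ψ(x) = E·ψ(x) and −φ''(x) + U(x)φ(x) = Ẽ·φ(x) for all x ∈ I, where E, Ẽ ∈ ℂ, and suppose φ(x) ≠ 0 for all x ∈ I. Define ψ⁽¹⁾(x) := (φ(x)ψ'(x) − φ'(x)ψ(x))/φ(x) and U⁽¹⁾(x) := U(x) − 2(φ''(x)/φ(x) − (φ'(x)/φ(x))²). Then −(ψ⁽¹⁾)''(x) + U⁽¹⁾(x)ψ⁽¹⁾(x) = E·ψ⁽¹⁾(x) for all x ∈ I. -/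
/-- One-step Darboux transformation: given a seed solution `φ` (with energy `F`) of the
Schrödinger-type equation `-f'' + U f = λ f` on the open interval `(a, b)`, nonvanishing on the
interval, the function `ψ⁽¹⁾ = (φ ψ' - φ' ψ)/φ` solves the equation with the deformed potential
`U⁽¹⁾ = U - 2(φ''/φ - (φ'/φ)²)` at the unchanged energy `E`. -/
theorem stmt_0 (a b : ℝ) (U ψ φ : ℝ → ℂ) (E F : ℂ)
    (hU : ContDiffOn ℝ (⊤ : ℕ∞) U (Set.Ioo a b))
    (hψ : ContDiffOn ℝ (⊤ : ℕ∞) ψ (Set.Ioo a b))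
    (hφ : ContDiffOn ℝ (⊤ : ℕ∞) φ (Set.Ioo a b))
    (heqψ : ∀ x ∈ Set.Ioo a b, -(deriv (deriv ψ) x) + U x * ψ x = E * ψ x)
    (heqφ : ∀ x ∈ Set.Ioo a b, -(deriv (deriv φ) x) + U x * φ x = F * φ x)
    (hφ0 : ∀ x ∈ Set.Ioo a b, φ x ≠ 0) :
    ∀ x ∈ Set.Ioo a b,
      -(deriv (deriv (fun y => (φ y * deriv ψ y - deriv φ y * ψ y) / φ y)) x)
        + (U x - 2 * (deriv (deriv φ) x / φ x - (deriv φ x / φ x) ^ 2))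
          * ((φ x * deriv ψ x - deriv φ x * ψ x) / φ x)
      = E * ((φ x * deriv ψ x - deriv φ x * ψ x) / φ x) := by
  intro x hx
  set s := Set.Ioo a b with hsdef
  have hs : IsOpen s := isOpen_Ioo
  -- differentiability of derivatives
  have hψ1 : ContDiffOn ℝ (⊤ : ℕ∞) (deriv ψ) s := hψ.deriv_of_isOpen hs (by simp)
  have hφ1 : ContDiffOn ℝ (⊤ : ℕ∞) (deriv φ) s := hφ.deriv_of_isOpen hs (by simp)
  have hφ2 : ContDiffOn ℝ (⊤ : ℕ∞) (deriv (deriv φ)) s := hφ1.deriv_of_isOpen hs (by simp)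
  have dAt : ∀ (f : ℝ → ℂ), ContDiffOn ℝ (⊤ : ℕ∞) f s → ∀ y ∈ s, DifferentiableAt ℝ f y := by
    intro f hf y hy
    exact (hf.differentiableOn (by simp)).differentiableAt (hs.mem_nhds hy)
  have dψ := dAt ψ hψ
  have dψ' := dAt (deriv ψ) hψ1
  have dφ := dAt φ hφ
  have dφ' := dAt (deriv φ) hφ1
  have dU := dAt U hU
  -- second derivatives via the equations
  have hψ'' : ∀ y ∈ s, deriv (deriv ψ) y = U y * ψ y - E * ψ y := by
    intro y hy; linear_combination -(heqψ y hy)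
  have hφ'' : ∀ y ∈ s, deriv (deriv φ) y = U y * φ y - F * φ y := by
    intro y hy; linear_combination -(heqφ y hy)
  -- numerator and its derivative
  have dnum : ∀ y ∈ s, DifferentiableAt ℝ (fun y => φ y * deriv ψ y - deriv φ y * ψ y) y := by
    intro y hy
    exact ((dφ y hy).mul (dψ' y hy)).sub ((dφ' y hy).mul (dψ y hy))
  have hnum : ∀ y ∈ s, deriv (fun y => φ y * deriv ψ y - deriv φ y * ψ y) y
      = (deriv φ y * deriv ψ y + φ y * deriv (deriv ψ) y)
        - (deriv (deriv φ) y * ψ y + deriv φ y * deriv ψ y) := by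
    intro y hy
    rw [deriv_fun_sub ((dφ y hy).fun_mul (dψ' y hy)) ((dφ' y hy).fun_mul (dψ y hy)),
      deriv_fun_mul (dφ y hy) (dψ' y hy), deriv_fun_mul (dφ' y hy) (dψ y hy)]
  -- first derivative of ψ⁽¹⁾ on s
  set g : ℝ → ℂ := fun y =>
    (F - E) * ψ y - deriv φ y * (φ y * deriv ψ y - deriv φ y * ψ y) / φ y ^ 2 with hg
  have key : ∀ y ∈ s, deriv (fun y => (φ y * deriv ψ y - deriv φ y * ψ y) / φ y) y = g y := by
    intro y hy
    rw [deriv_fun_div (dnum y hy) (dφ y hy) (hφ0 y hy), hnum y hy, hψ'' y hy, hφ'' y hy, hg]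
    field_simp [hφ0 y hy]
    ring
  have hev : (deriv (fun y => (φ y * deriv ψ y - deriv φ y * ψ y) / φ y)) =ᶠ[nhds x] g :=
    Filter.eventuallyEq_of_mem (hs.mem_nhds hx) (fun y hy => key y hy)
  rw [hev.deriv_eq]
  -- compute deriv g x
  have dφsq : DifferentiableAt ℝ (fun y => φ y ^ 2) x := (dφ x hx).pow 2
  have hderivg : deriv g x
      = (F - E) * deriv ψ x
        - ((deriv (deriv φ) x * (φ x * deriv ψ x - deriv φ x * ψ x)
              + deriv φ x * ((deriv φ x * deriv ψ x + φ x * deriv (deriv ψ) x)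
                - (deriv (deriv φ) x * ψ x + deriv φ x * deriv ψ x))) * φ x ^ 2
            - deriv φ x * (φ x * deriv ψ x - deriv φ x * ψ x)
              * (2 * φ x * deriv φ x)) / (φ x ^ 2) ^ 2 := by
    rw [hg]
    rw [deriv_fun_sub ((differentiableAt_const _).fun_mul (dψ x hx))
      (((dφ' x hx).fun_mul (dnum x hx)).fun_div dφsq (pow_ne_zero 2 (hφ0 x hx))),
      deriv_const_mul _ (dψ x hx),
      deriv_fun_div ((dφ' x hx).fun_mul (dnum x hx)) dφsq (pow_ne_zero 2 (hφ0 x hx)),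
      deriv_fun_mul (dφ' x hx) (dnum x hx), hnum x hx]
    congr 2
    have : deriv (fun y => φ y ^ 2) x = 2 * φ x * deriv φ x := by
      rw [show (fun y => φ y ^ 2) = fun y => φ y * φ y by funext y; ring,
        deriv_fun_mul (dφ x hx) (dφ x hx)]
      ring
    rw [this]
  rw [hderivg, hψ'' x hx, hφ'' x hx]
  field_simp [hφ0 x hx]
  ring
end

section
/- Let x₁ < x₂ be real numbers, I = (x₁, x₂), w : I → ℝ smooth, and set (Af)(x) := f'(x) − w'(x)f(x) and U(x) := (w'(x))² + w''(x). Let φ, χ : I → ℝ be smooth with −φ'' + U·φ = E·φ and −χ'' + U·χ = F·χ on I (E, F ∈ ℝ). Assume that the products φ·χ and (Aφ)·(Aχ) are integrable on I, and that φ(x)·(Aχ)(x) → 0 as x → x₁⁺ and as x → x₂⁻. Then ∫_{x₁}^{x₂} (Aφ)(x)(Aχ)(x) dx = F · ∫_{x₁}^{x₂} φ(x)χ(x) dx. -/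
open MeasureTheory Set Filter

/-- Norm relation in Crum's theorem: for eigenfunction-type solutions `φ, χ` of the factorised
Hamiltonian `H = A†A = -d²/dx² + (w')² + w''` with energies `E, F`, the Darboux–Crum images
`Aφ, Aχ` (where `(Af)(x) = f'(x) - w'(x) f(x)`) satisfy `(Aφ, Aχ) = F · (φ, χ)`, provided the
products are integrable and the boundary term `φ · (Aχ)` vanishes at both ends. -/
theorem stmt_5 (x₁ x₂ : ℝ) (hx : x₁ < x₂) (w φ χ : ℝ → ℝ) (E F : ℝ)
    (hw : ContDiffOn ℝ (⊤ : ℕ∞) w (Set.Ioo x₁ x₂))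
    (hφ : ContDiffOn ℝ (⊤ : ℕ∞) φ (Set.Ioo x₁ x₂))
    (hχ : ContDiffOn ℝ (⊤ : ℕ∞) χ (Set.Ioo x₁ x₂))
    (heqφ : ∀ x ∈ Set.Ioo x₁ x₂,
      -(deriv (deriv φ) x) + ((deriv w x) ^ 2 + deriv (deriv w) x) * φ x = E * φ x)
    (heqχ : ∀ x ∈ Set.Ioo x₁ x₂,
      -(deriv (deriv χ) x) + ((deriv w x) ^ 2 + deriv (deriv w) x) * χ x = F * χ x)
    (hint1 : MeasureTheory.IntegrableOn (fun x => φ x * χ x) (Set.Ioo x₁ x₂))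
    (hint2 : MeasureTheory.IntegrableOn
      (fun x => (deriv φ x - deriv w x * φ x) * (deriv χ x - deriv w x * χ x))
      (Set.Ioo x₁ x₂))
    (hlim1 : Filter.Tendsto (fun x => φ x * (deriv χ x - deriv w x * χ x))
      (nhdsWithin x₁ (Set.Ioi x₁)) (nhds 0))
    (hlim2 : Filter.Tendsto (fun x => φ x * (deriv χ x - deriv w x * χ x))
      (nhdsWithin x₂ (Set.Iio x₂)) (nhds 0)) :
    ∫ x in Set.Ioo x₁ x₂,
        (deriv φ x - deriv w x * φ x) * (deriv χ x - deriv w x * χ x)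
      = F * ∫ x in Set.Ioo x₁ x₂, φ x * χ x := by
  have hopen : IsOpen (Set.Ioo x₁ x₂) := isOpen_Ioo
  set s := Set.Ioo x₁ x₂
  -- differentiability facts
  have hw' : ContDiffOn ℝ (⊤ : ℕ∞) (deriv w) s := hw.deriv_of_isOpen hopen (by simp)
  have hχ' : ContDiffOn ℝ (⊤ : ℕ∞) (deriv χ) s := hχ.deriv_of_isOpen hopen (by simp)
  set g : ℝ → ℝ := fun x => φ x * (deriv χ x - deriv w x * χ x) with hg
  set g' : ℝ → ℝ := fun x =>
    (deriv φ x - deriv w x * φ x) * (deriv χ x - deriv w x * χ x) - F * (φ x * χ x) with hg'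
  have hderiv : ∀ x ∈ s, HasDerivAt g (g' x) x := by
    intro x hxs
    have hmem := hopen.mem_nhds hxs
    have dφ : HasDerivAt φ (deriv φ x) x :=
      ((hφ.contDiffAt hmem).differentiableAt (by simp)).hasDerivAt
    have dχ : HasDerivAt χ (deriv χ x) x :=
      ((hχ.contDiffAt hmem).differentiableAt (by simp)).hasDerivAt
    have dχ' : HasDerivAt (deriv χ) (deriv (deriv χ) x) x :=
      ((hχ'.contDiffAt hmem).differentiableAt (by simp)).hasDerivAt
    have dw' : HasDerivAt (deriv w) (deriv (deriv w) x) x :=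
      ((hw'.contDiffAt hmem).differentiableAt (by simp)).hasDerivAt
    have h := dφ.mul (dχ'.sub (dw'.mul dχ))
    have heq := heqχ x hxs
    refine (h.congr_deriv ?_ : HasDerivAt g _ x)
    have hχ'' : deriv (deriv χ) x = (deriv w x ^ 2 + deriv (deriv w) x) * χ x - F * χ x := by
      linarith
    simp only [hg', Pi.mul_apply, Pi.sub_apply]
    rw [hχ'']
    ring
  have hgint : IntervalIntegrable g' volume x₁ x₂ := by
    rw [intervalIntegrable_iff_integrableOn_Ioo_of_le hx.le]
    exact hint2.sub (hint1.const_mul F)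
  have key : ∫ y in x₁..x₂, g' y = 0 - 0 :=
    intervalIntegral.integral_eq_sub_of_hasDerivAt_of_tendsto hx hderiv hgint hlim1 hlim2
  rw [intervalIntegral.integral_of_le hx.le, MeasureTheory.integral_Ioc_eq_integral_Ioo] at key
  have hsplit : ∫ x in s, g' x
      = (∫ x in s, (deriv φ x - deriv w x * φ x) * (deriv χ x - deriv w x * χ x))
        - ∫ x in s, F * (φ x * χ x) :=
    MeasureTheory.integral_sub hint2 (hint1.const_mul F)
  rw [hsplit] at key
  rw [MeasureTheory.integral_const_mul] at key
  linarith [key]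
end

section
/- Let n ≥ 0 and let f₁, …, fₙ, g, h : ℝ → ℂ be smooth functions. Then for all x ∈ ℝ: W[ W[f₁,…,fₙ,g], W[f₁,…,fₙ,h] ](x) = W[f₁,…,fₙ](x) · W[f₁,…,fₙ,g,h](x), where for n = 0 one sets W[g] = g and the empty Wronskian W[] = 1. -/
open Matrix Finset

/-- The Wronskian of `n` functions: determinant of the matrix whose `(j,k)` entry is the
`j`-th derivative (0-based) of the `k`-th function.  For `n = 0` it is `1` (empty determinant)
and for one function `W[g] = g`. -/
noncomputable def wronskian (n : ℕ) (f : Fin n → ℝ → ℂ) (x : ℝ) : ℂ :=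
  (Matrix.of fun j k : Fin n => iteratedDeriv (j : ℕ) (f k) x).det

lemma jacobi_star {R : Type*} [CommRing R] (n : ℕ) (M : Matrix (Fin (n+2)) (Fin (n+2)) R) :
    M.det *
      ((M.submatrix (⟨n, by omega⟩ : Fin (n+2)).succAbove (⟨n, by omega⟩ : Fin (n+2)).succAbove).det *
        (M.submatrix (⟨n+1, by omega⟩ : Fin (n+2)).succAbove (⟨n+1, by omega⟩ : Fin (n+2)).succAbove).det -
       (M.submatrix (⟨n, by omega⟩ : Fin (n+2)).succAbove (⟨n+1, by omega⟩ : Fin (n+2)).succAbove).det *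
        (M.submatrix (⟨n+1, by omega⟩ : Fin (n+2)).succAbove (⟨n, by omega⟩ : Fin (n+2)).succAbove).det)
    = M.det * ((M.submatrix (fun i : Fin n => Fin.castAdd 2 i) (fun i : Fin n => Fin.castAdd 2 i)).det * M.det) := by
  classical
  set pn : Fin (n+2) := ⟨n, by omega⟩ with hpn
  set pl : Fin (n+2) := ⟨n+1, by omega⟩ with hpl
  set K : Matrix (Fin (n+2)) (Fin (n+2)) R :=
    Matrix.of fun p q : Fin (n+2) =>
      if (q : ℕ) < n then (if p = q then (1:R) else 0) else M.adjugate p q with hK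
  have hMK : M * K = Matrix.of fun p q : Fin (n+2) =>
      if (q : ℕ) < n then M p q else M.det * (if p = q then (1:R) else 0) := by
    ext p q
    rw [Matrix.mul_apply, Matrix.of_apply]
    by_cases hq : (q : ℕ) < n
    · simp [hK, hq, mul_ite, Finset.sum_ite_eq']
    · have h2 := congrFun (congrFun (Matrix.mul_adjugate M) p) q
      rw [Matrix.mul_apply] at h2
      simp only [hK, Matrix.of_apply, hq, if_false]
      rw [h2]
      simp [Matrix.one_apply, Matrix.smul_apply, smul_eq_mul, mul_ite, mul_one, mul_zero]
  set e := finSumFinEquiv (m := n) (n := 2) with he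
  have hdet1 : (M * K).det =
      (M.submatrix (fun i : Fin n => Fin.castAdd 2 i) (fun i : Fin n => Fin.castAdd 2 i)).det
        * (M.det * M.det) := by
    rw [← Matrix.det_submatrix_equiv_self e (M * K)]
    have hb : (M * K).submatrix e e = Matrix.fromBlocks
        (M.submatrix (fun i : Fin n => Fin.castAdd 2 i) (fun i : Fin n => Fin.castAdd 2 i))
        0
        (M.submatrix (fun i : Fin 2 => Fin.natAdd n i) (fun i : Fin n => Fin.castAdd 2 i))
        (M.det • (1 : Matrix (Fin 2) (Fin 2) R)) := by
      ext p q
      rcases p with p | p <;> rcases q with q | q <;>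
        simp only [Matrix.submatrix_apply, he, finSumFinEquiv_apply_left,
          finSumFinEquiv_apply_right, hMK, Matrix.of_apply, Matrix.fromBlocks_apply₁₁,
          Matrix.fromBlocks_apply₁₂, Matrix.fromBlocks_apply₂₁, Matrix.fromBlocks_apply₂₂,
          Fin.coe_castAdd, Fin.coe_natAdd, Matrix.one_apply, Matrix.smul_apply, smul_eq_mul,
          Matrix.zero_apply]
      · rw [if_pos q.is_lt]
      · rw [if_neg (by omega), if_neg (by simp [Fin.ext_iff]; omega), mul_zero]
      · rw [if_pos q.is_lt]
      · rw [if_neg (by omega)]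
        congr 1
        exact if_congr (by simp [Fin.ext_iff]) rfl rfl
    rw [hb, Matrix.det_fromBlocks_zero₁₂, Matrix.det_smul, Matrix.det_one]
    simp only [Fintype.card_fin]
    ring
  have hdet2 : K.det = (Matrix.of fun i j : Fin 2 =>
      M.adjugate (Fin.natAdd n i) (Fin.natAdd n j)).det := by
    rw [← Matrix.det_submatrix_equiv_self e K]
    have hb : K.submatrix e e = Matrix.fromBlocks
        (1 : Matrix (Fin n) (Fin n) R)
        (Matrix.of fun (i : Fin n) (j : Fin 2) => M.adjugate (Fin.castAdd 2 i) (Fin.natAdd n j))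
        0
        (Matrix.of fun i j : Fin 2 => M.adjugate (Fin.natAdd n i) (Fin.natAdd n j)) := by
      ext p q
      rcases p with p | p <;> rcases q with q | q <;>
        simp only [Matrix.submatrix_apply, he, finSumFinEquiv_apply_left,
          finSumFinEquiv_apply_right, hK, Matrix.of_apply, Matrix.fromBlocks_apply₁₁,
          Matrix.fromBlocks_apply₁₂, Matrix.fromBlocks_apply₂₁, Matrix.fromBlocks_apply₂₂,
          Fin.coe_castAdd, Fin.coe_natAdd, Matrix.one_apply, Matrix.zero_apply]
      · rw [if_pos q.is_lt]
        exact if_congr (by simp [Fin.ext_iff]) rfl rfl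
      · rw [if_neg (by omega)]
      · rw [if_pos q.is_lt, if_neg (by simp [Fin.ext_iff]; omega)]
      · rw [if_neg (by omega)]
    rw [hb, Matrix.det_fromBlocks_zero₂₁, Matrix.det_one, one_mul]
  have hnn : Fin.natAdd n (0 : Fin 2) = pn := by simp [Fin.ext_iff, hpn]
  have hnl : Fin.natAdd n (1 : Fin 2) = pl := by simp [Fin.ext_iff, hpl]
  have hadj : ∀ i j : Fin (n+2), M.adjugate i j =
      (-1) ^ ((j : ℕ) + (i : ℕ)) * (M.submatrix j.succAbove i.succAbove).det :=
    fun i j => Matrix.adjugate_fin_succ_eq_det_submatrix M i j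
  have hKbr : (Matrix.of fun i j : Fin 2 =>
      M.adjugate (Fin.natAdd n i) (Fin.natAdd n j)).det =
      (M.submatrix pn.succAbove pn.succAbove).det * (M.submatrix pl.succAbove pl.succAbove).det -
      (M.submatrix pn.succAbove pl.succAbove).det * (M.submatrix pl.succAbove pn.succAbove).det := by
    rw [Matrix.det_fin_two]
    simp only [Matrix.of_apply, hnn, hnl, hadj]
    have e1 : (-1 : R) ^ ((pn : ℕ) + (pn : ℕ)) = 1 := Even.neg_one_pow ⟨n, rfl⟩
    have e2 : (-1 : R) ^ ((pl : ℕ) + (pl : ℕ)) = 1 := Even.neg_one_pow ⟨n+1, rfl⟩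
    have e3 : (-1 : R) ^ ((pl : ℕ) + (pn : ℕ)) = -1 := Odd.neg_one_pow ⟨n, by simp [hpn, hpl]; ring⟩
    have e4 : (-1 : R) ^ ((pn : ℕ) + (pl : ℕ)) = -1 := Odd.neg_one_pow ⟨n, by simp [hpn, hpl]; ring⟩
    rw [e1, e2, e3, e4]
    ring
  have hfin := Matrix.det_mul M K
  rw [hdet1, hdet2, hKbr] at hfin
  rw [← hfin]
  ring

lemma jacobi (n : ℕ) (M : Matrix (Fin (n+2)) (Fin (n+2)) ℂ) :
    (M.submatrix (⟨n, by omega⟩ : Fin (n+2)).succAbove (⟨n, by omega⟩ : Fin (n+2)).succAbove).det *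
      (M.submatrix (⟨n+1, by omega⟩ : Fin (n+2)).succAbove (⟨n+1, by omega⟩ : Fin (n+2)).succAbove).det -
    (M.submatrix (⟨n, by omega⟩ : Fin (n+2)).succAbove (⟨n+1, by omega⟩ : Fin (n+2)).succAbove).det *
      (M.submatrix (⟨n+1, by omega⟩ : Fin (n+2)).succAbove (⟨n, by omega⟩ : Fin (n+2)).succAbove).det
    = (M.submatrix (fun i : Fin n => Fin.castAdd 2 i) (fun i : Fin n => Fin.castAdd 2 i)).det * M.det := by
  classical
  set N : Matrix (Fin (n+2)) (Fin (n+2)) (Polynomial ℂ) := charmatrix (-M) with hN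
  have hdetN : N.det ≠ 0 := by
    have : N.det = (-M).charpoly := rfl
    rw [this]
    exact (Matrix.charpoly_monic _).ne_zero
  have hstar := jacobi_star n N
  have hcancel := mul_left_cancel₀ hdetN hstar
  -- hcancel : a*d - b*c = detP * detN   (over (Polynomial ℂ))
  have hmap : N.map (Polynomial.evalRingHom (0 : ℂ)) = M := by
    ext i j
    by_cases hij : i = j
    · subst hij
      simp [hN, charmatrix_apply_eq]
    · simp [hN, charmatrix_apply_ne _ _ _ hij]
  have key : ∀ (u v : Fin (n+1) → Fin (n+2)),
      Polynomial.evalRingHom (0:ℂ) ((N.submatrix u v).det) = ((M.submatrix u v).det) := by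
    intro u v
    rw [RingHom.map_det, RingHom.mapMatrix_apply,
      show (N.submatrix u v).map (Polynomial.evalRingHom (0:ℂ)) =
        (N.map (Polynomial.evalRingHom (0:ℂ))).submatrix u v from rfl, hmap]
  have key2 : ∀ (u v : Fin n → Fin (n+2)),
      Polynomial.evalRingHom (0:ℂ) ((N.submatrix u v).det) = ((M.submatrix u v).det) := by
    intro u v
    rw [RingHom.map_det, RingHom.mapMatrix_apply,
      show (N.submatrix u v).map (Polynomial.evalRingHom (0:ℂ)) =
        (N.map (Polynomial.evalRingHom (0:ℂ))).submatrix u v from rfl, hmap]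
  have keyN : Polynomial.evalRingHom (0:ℂ) N.det = M.det := by
    rw [RingHom.map_det, RingHom.mapMatrix_apply, hmap]
  have := congrArg (Polynomial.evalRingHom (0 : ℂ)) hcancel
  simpa only [_root_.map_sub, _root_.map_mul, key, key2, keyN] using this

lemma hasDerivAt_det_rows {m : ℕ} (A : Fin m → Fin m → ℝ → ℂ) (A' : Fin m → Fin m → ℂ) (x : ℝ)
    (h : ∀ j k, HasDerivAt (A j k) (A' j k) x) :
    HasDerivAt (fun y => (Matrix.of fun j k => A j k y).det)
      (∑ i, (Matrix.of fun j k => if j = i then A' j k else A j k x).det) x := by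
  have key : ∀ (B : Fin m → Fin m → ℂ),
      (Matrix.of B).det = ∑ σ : Equiv.Perm (Fin m),
        ((Equiv.Perm.sign σ : ℤ) : ℂ) * ∏ j, B j (σ j) := by
    intro B
    rw [← Matrix.det_transpose, Matrix.det_apply']
    rfl
  simp only [key]
  have H : HasDerivAt
      (fun y => ∑ σ : Equiv.Perm (Fin m), ((Equiv.Perm.sign σ : ℤ) : ℂ) * ∏ j, A j (σ j) y)
      (∑ σ : Equiv.Perm (Fin m), ((Equiv.Perm.sign σ : ℤ) : ℂ) *
        ∑ i, (∏ j ∈ univ.erase i, A j (σ j) x) • A' i (σ i)) x := by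
    exact HasDerivAt.fun_sum fun σ _ =>
      (HasDerivAt.fun_finsetProd fun j _ => h j (σ j)).const_mul _
  convert H using 1
  rw [Finset.sum_comm]
  refine Finset.sum_congr rfl fun σ _ => ?_
  rw [Finset.mul_sum]
  refine Finset.sum_congr rfl fun i _ => ?_
  rw [smul_eq_mul]
  congr 1
  rw [← Finset.mul_prod_erase univ _ (mem_univ i), if_pos rfl]
  rw [mul_comm]
  congr 1
  exact Finset.prod_congr rfl fun j hj => if_neg (Finset.ne_of_mem_erase hj)

lemma hasDerivAt_iteratedDeriv {f : ℝ → ℂ} (hf : ContDiff ℝ (⊤ : ℕ∞) f) (j : ℕ) (x : ℝ) :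
    HasDerivAt (iteratedDeriv j f) (iteratedDeriv (j+1) f x) x := by
  have hs : ContDiff ℝ (⊤ : ℕ∞) (deriv^[j] f) :=
    ContDiff.iterate_deriv j (hf.of_le (by simp))
  have hdiff : DifferentiableAt ℝ (deriv^[j] f) x :=
    (hs.differentiable (by simp)).differentiableAt
  have h1 := hdiff.hasDerivAt
  rw [iteratedDeriv_eq_iterate, iteratedDeriv_eq_iterate, Function.iterate_succ_apply']
  exact h1

lemma wronskian_hasDerivAt {m : ℕ} (F : Fin (m+1) → ℝ → ℂ) (hF : ∀ k, ContDiff ℝ (⊤ : ℕ∞) (F k)) (x : ℝ) :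
    HasDerivAt (fun y => wronskian (m+1) F y)
      ((Matrix.of fun (j : Fin (m+1)) (k : Fin (m+1)) =>
        iteratedDeriv (if j = Fin.last m then m+1 else (j : ℕ)) (F k) x).det) x := by
  have H := hasDerivAt_det_rows (fun j k => iteratedDeriv (j : ℕ) (F k))
    (fun j k => iteratedDeriv ((j : ℕ)+1) (F k) x) x
    (fun j k => hasDerivAt_iteratedDeriv (hF k) (j : ℕ) x)
  have hsum : (∑ i : Fin (m+1), (Matrix.of fun j k : Fin (m+1) =>
        if j = i then iteratedDeriv ((j : ℕ)+1) (F k) x else iteratedDeriv (j : ℕ) (F k) x).det)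
      = (Matrix.of fun (j : Fin (m+1)) (k : Fin (m+1)) =>
        iteratedDeriv (if j = Fin.last m then m+1 else (j : ℕ)) (F k) x).det := by
    rw [Finset.sum_eq_single (Fin.last m)]
    · congr 1
      ext j k
      by_cases hj : j = Fin.last m
      · subst hj; simp
      · simp [hj]
    · intro i _ hi
      have hilt : (i : ℕ) < m := by
        rcases Fin.lt_or_eq_of_le (Fin.le_last i) with h | h
        · exact h
        · exact absurd h hi
      have h1 : (⟨(i:ℕ)+1, by omega⟩ : Fin (m+1)) ≠ i := by
        simp only [ne_eq, Fin.ext_iff]; omega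
      apply Matrix.det_zero_of_row_eq (i_ne_j := h1.symm)
      funext k
      show (if i = i then _ else _) = (if (⟨(i:ℕ)+1, by omega⟩ : Fin (m+1)) = i then _ else _)
      rw [if_pos rfl, if_neg h1]
    · simp
  rw [← hsum]
  exact H

/-- The Wronskian identity
`W[W[f₁,…,fₙ,g], W[f₁,…,fₙ,h]] = W[f₁,…,fₙ] · W[f₁,…,fₙ,g,h]` for smooth functions. -/
theorem stmt_7 (n : ℕ) (f : Fin n → ℝ → ℂ) (g h : ℝ → ℂ)
    (hf : ∀ k, ContDiff ℝ (⊤ : ℕ∞) (f k)) (hg : ContDiff ℝ (⊤ : ℕ∞) g) (hh : ContDiff ℝ (⊤ : ℕ∞) h) :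
    ∀ x : ℝ,
      wronskian 2 ![fun y => wronskian (n + 1) (Fin.snoc f g) y,
                    fun y => wronskian (n + 1) (Fin.snoc f h) y] x
        = wronskian n f x * wronskian (n + 2) (Fin.snoc (Fin.snoc f g) h) x := by
  intro x
  classical
  set F : Fin (n+2) → ℝ → ℂ := Fin.snoc (Fin.snoc f g) h with hF
  set M : Matrix (Fin (n+2)) (Fin (n+2)) ℂ :=
    Matrix.of (fun j k : Fin (n+2) => iteratedDeriv (j:ℕ) (F k) x) with hM
  set pn : Fin (n+2) := ⟨n, by omega⟩ with hpn
  set pl : Fin (n+2) := ⟨n+1, by omega⟩ with hpl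
  -- index facts
  have hpl_last : pl = Fin.last (n+1) := rfl
  have hBval : ∀ j : Fin (n+1), ((pl.succAbove j : Fin (n+2)) : ℕ) = (j : ℕ) := by
    intro j; rw [hpl_last, Fin.succAbove_last]; simp
  have hCval : ∀ j : Fin (n+1),
      ((pn.succAbove j : Fin (n+2)) : ℕ) = if j = Fin.last n then n+1 else (j : ℕ) := by
    intro j
    by_cases hj : j = Fin.last n
    · subst hj
      rw [Fin.succAbove_of_le_castSucc _ _ (by simp [Fin.le_def, hpn])]
      simp
    · rw [Fin.succAbove_of_castSucc_lt _ _ (by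
        simp only [Fin.lt_def, Fin.coe_castSucc, hpn]
        exact Fin.val_lt_last hj)]
      simp [hj]
  have hFg : ∀ k : Fin (n+1), F (pl.succAbove k) = (Fin.snoc f g : Fin (n+1) → ℝ → ℂ) k := by
    intro k
    rw [hpl_last, Fin.succAbove_last]
    simp [hF, Fin.snoc_castSucc]
  have hFh : ∀ k : Fin (n+1), F (pn.succAbove k) = (Fin.snoc f h : Fin (n+1) → ℝ → ℂ) k := by
    intro k
    refine Fin.lastCases ?_ (fun i => ?_) k
    · rw [Fin.succAbove_of_le_castSucc _ _ (by simp [Fin.le_def, hpn]), Fin.succ_last]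
      simp [hF, Fin.snoc_last]
    · rw [Fin.succAbove_of_castSucc_lt _ _ (by simp [Fin.lt_def, hpn])]
      simp [hF, Fin.snoc_castSucc]
  have hFf : ∀ i : Fin n, F (Fin.castAdd 2 i) = f i := by
    intro i
    have : Fin.castAdd 2 i = Fin.castSucc (Fin.castSucc i) := by
      simp [Fin.ext_iff]
    rw [this]
    simp [hF, Fin.snoc_castSucc]
  -- smoothness of snocs
  have hFG : ∀ k, ContDiff ℝ (⊤ : ℕ∞) ((Fin.snoc f g : Fin (n+1) → ℝ → ℂ) k) := by
    intro k
    refine Fin.lastCases ?_ (fun i => ?_) k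
    · rw [Fin.snoc_last]; exact hg
    · rw [Fin.snoc_castSucc]; exact hf i
  have hFH : ∀ k, ContDiff ℝ (⊤ : ℕ∞) ((Fin.snoc f h : Fin (n+1) → ℝ → ℂ) k) := by
    intro k
    refine Fin.lastCases ?_ (fun i => ?_) k
    · rw [Fin.snoc_last]; exact hh
    · rw [Fin.snoc_castSucc]; exact hf i
  have HG := wronskian_hasDerivAt (Fin.snoc f g) hFG x
  have HH := wronskian_hasDerivAt (Fin.snoc f h) hFH x
  -- compute LHS 2x2 wronskian
  have hL : wronskian 2 ![fun y => wronskian (n + 1) (Fin.snoc f g) y,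
      fun y => wronskian (n + 1) (Fin.snoc f h) y] x
      = wronskian (n+1) (Fin.snoc f g) x *
          ((Matrix.of fun (j : Fin (n+1)) (k : Fin (n+1)) =>
            iteratedDeriv (if j = Fin.last n then n+1 else (j : ℕ)) ((Fin.snoc f h : Fin (n+1) → ℝ → ℂ) k) x).det)
        - wronskian (n+1) (Fin.snoc f h) x *
          ((Matrix.of fun (j : Fin (n+1)) (k : Fin (n+1)) =>
            iteratedDeriv (if j = Fin.last n then n+1 else (j : ℕ)) ((Fin.snoc f g : Fin (n+1) → ℝ → ℂ) k) x).det) := by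
    rw [wronskian, Matrix.det_fin_two]
    simp only [Matrix.of_apply, Matrix.cons_val', Matrix.cons_val_zero, Matrix.cons_val_one,
      Matrix.head_cons, Matrix.empty_val', Matrix.cons_val_fin_one, Matrix.head_fin_const,
      Fin.val_zero, Fin.val_one, iteratedDeriv_zero, iteratedDeriv_one]
    rw [HG.deriv, HH.deriv]
  rw [hL]
  -- identify the four minors
  have hWg : wronskian (n+1) (Fin.snoc f g) x = (M.submatrix pl.succAbove pl.succAbove).det := by
    rw [wronskian]; congr 1; ext j k
    simp only [Matrix.submatrix_apply, Matrix.of_apply, hM]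
    rw [hFg k, hBval j]
  have hWh : wronskian (n+1) (Fin.snoc f h) x = (M.submatrix pl.succAbove pn.succAbove).det := by
    rw [wronskian]; congr 1; ext j k
    simp only [Matrix.submatrix_apply, Matrix.of_apply, hM]
    rw [hFh k, hBval j]
  have hDG : (Matrix.of fun (j : Fin (n+1)) (k : Fin (n+1)) =>
      iteratedDeriv (if j = Fin.last n then n+1 else (j : ℕ)) ((Fin.snoc f g : Fin (n+1) → ℝ → ℂ) k) x).det
      = (M.submatrix pn.succAbove pl.succAbove).det := by
    congr 1; ext j k
    simp only [Matrix.submatrix_apply, Matrix.of_apply, hM]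
    rw [hFg k, hCval j]
  have hDH : (Matrix.of fun (j : Fin (n+1)) (k : Fin (n+1)) =>
      iteratedDeriv (if j = Fin.last n then n+1 else (j : ℕ)) ((Fin.snoc f h : Fin (n+1) → ℝ → ℂ) k) x).det
      = (M.submatrix pn.succAbove pn.succAbove).det := by
    congr 1; ext j k
    simp only [Matrix.submatrix_apply, Matrix.of_apply, hM]
    rw [hFh k, hCval j]
  have hWf : wronskian n f x =
      (M.submatrix (fun i : Fin n => Fin.castAdd 2 i) (fun i : Fin n => Fin.castAdd 2 i)).det := by
    rw [wronskian]; congr 1; ext j k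
    simp only [Matrix.submatrix_apply, Matrix.of_apply, hM]
    rw [hFf k]
    simp
  have hWF2 : wronskian (n+2) F x = M.det := rfl
  rw [hWg, hWh, hDG, hDH, hWf, hWF2]
  have := jacobi n M
  linear_combination this
end

section
/- Let n ≥ 1, let η : ℝ → ℝ be smooth, and let f₁, …, fₙ : ℝ → ℂ be smooth. Then for all x ∈ ℝ: W[f₁∘η, f₂∘η, …, fₙ∘η](x) = (η'(x))^{n(n−1)/2} · W[f₁, f₂, …, fₙ](η(x)), where on the right-hand side the Wronskian of f₁,…,fₙ is evaluated at the point η(x). -/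
/-- Faà di Bruno coefficients for iterated derivatives of a composition. -/
noncomputable def fdbCoef (η : ℝ → ℝ) : ℕ → ℕ → ℝ → ℝ
  | 0, 0 => fun _ => 1
  | 0, _ + 1 => fun _ => 0
  | j + 1, 0 => deriv (fdbCoef η j 0)
  | j + 1, i + 1 => fun x => deriv (fdbCoef η j (i + 1)) x + fdbCoef η j i x * deriv η x

lemma fdbCoef_smooth (η : ℝ → ℝ) (hη : ContDiff ℝ (⊤ : ℕ∞) η) :
    ∀ j i, ContDiff ℝ (⊤ : ℕ∞) (fdbCoef η j i) := by
  intro j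
  induction j with
  | zero =>
    intro i
    cases i with
    | zero => exact contDiff_const
    | succ i => exact contDiff_const
  | succ j ih =>
    intro i
    cases i with
    | zero => exact (contDiff_infty_iff_deriv.mp (ih 0)).2
    | succ i =>
      exact ((contDiff_infty_iff_deriv.mp (ih (i + 1))).2).add
        ((ih i).mul (contDiff_infty_iff_deriv.mp hη).2)

lemma fdbCoef_zero (η : ℝ → ℝ) : ∀ j i, j < i → fdbCoef η j i = fun _ => 0 := by
  intro j
  induction j with
  | zero =>
    intro i hi
    cases i with
    | zero => omega
    | succ i => rfl
  | succ j ih =>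
    intro i hi
    cases i with
    | zero => omega
    | succ i =>
      have h1 : fdbCoef η j (i + 1) = fun _ => 0 := ih (i + 1) (by omega)
      have h2 : fdbCoef η j i = fun _ => 0 := ih i (by omega)
      show (fun x => deriv (fdbCoef η j (i + 1)) x + fdbCoef η j i x * deriv η x) = _
      rw [h1, h2]
      funext x
      simp [deriv_const]

lemma fdbCoef_diag (η : ℝ → ℝ) :
    ∀ j, fdbCoef η j j = fun x => (deriv η x) ^ j := by
  intro j
  induction j with
  | zero => funext x; simp [fdbCoef]
  | succ j ih =>
    show (fun x => deriv (fdbCoef η j (j + 1)) x + fdbCoef η j j x * deriv η x) = _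
    rw [fdbCoef_zero η j (j + 1) (by omega), ih]
    funext x
    simp [deriv_const, pow_succ]

lemma fdb_formula (η : ℝ → ℝ) (hη : ContDiff ℝ (⊤ : ℕ∞) η) (f : ℝ → ℂ) (hf : ContDiff ℝ (⊤ : ℕ∞) f) :
    ∀ j x, iteratedDeriv j (f ∘ η) x
      = ∑ i ∈ Finset.range (j + 1), ((fdbCoef η j i x : ℝ) : ℂ) * iteratedDeriv i f (η x) := by
  intro j
  induction j with
  | zero =>
    intro x
    simp [fdbCoef, iteratedDeriv_zero, Function.comp]
  | succ j ih =>
    intro x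
    have hfi : ∀ i, ContDiff ℝ (⊤ : ℕ∞) (iteratedDeriv i f) := by
      intro i
      rw [iteratedDeriv_eq_iterate]
      exact hf.iterate_deriv i
    -- derivative of each summand
    have hterm : ∀ i, HasDerivAt
        (fun y => ((fdbCoef η j i y : ℝ) : ℂ) * iteratedDeriv i f (η y))
        (((deriv (fdbCoef η j i) x : ℝ) : ℂ) * iteratedDeriv i f (η x)
          + ((fdbCoef η j i x : ℝ) : ℂ) * (deriv η x • iteratedDeriv (i + 1) f (η x))) x := by
      intro i
      have hc : HasDerivAt (fun y => ((fdbCoef η j i y : ℝ) : ℂ))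
          ((deriv (fdbCoef η j i) x : ℝ) : ℂ) x :=
        (((fdbCoef_smooth η hη j i).differentiable (by norm_num) x).hasDerivAt).ofReal_comp
      have hg : HasDerivAt (iteratedDeriv i f) (iteratedDeriv (i + 1) f (η x)) (η x) := by
        have := ((hfi i).differentiable (by norm_num) (η x)).hasDerivAt
        rwa [iteratedDeriv_succ]
      have hηd : HasDerivAt η (deriv η x) x := (hη.differentiable (by norm_num) x).hasDerivAt
      have hcomp : HasDerivAt (fun y => iteratedDeriv i f (η y))
          (deriv η x • iteratedDeriv (i + 1) f (η x)) x := hg.scomp x hηd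
      exact hc.mul hcomp
    have hsum : HasDerivAt
        (fun y => ∑ i ∈ Finset.range (j + 1),
          ((fdbCoef η j i y : ℝ) : ℂ) * iteratedDeriv i f (η y))
        (∑ i ∈ Finset.range (j + 1),
          (((deriv (fdbCoef η j i) x : ℝ) : ℂ) * iteratedDeriv i f (η x)
            + ((fdbCoef η j i x : ℝ) : ℂ) * (deriv η x • iteratedDeriv (i + 1) f (η x)))) x :=
      HasDerivAt.fun_sum fun i _ => hterm i
    have hEq : iteratedDeriv j (f ∘ η) = fun y => ∑ i ∈ Finset.range (j + 1),
        ((fdbCoef η j i y : ℝ) : ℂ) * iteratedDeriv i f (η y) := funext ih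
    rw [iteratedDeriv_succ, hEq, hsum.deriv]
    -- now rearrange sums
    rw [Finset.sum_add_distrib]
    -- extend the first sum to range (j + 2)
    have hA : ∑ i ∈ Finset.range (j + 1),
        ((deriv (fdbCoef η j i) x : ℝ) : ℂ) * iteratedDeriv i f (η x)
        = ∑ i ∈ Finset.range (j + 2),
          ((deriv (fdbCoef η j i) x : ℝ) : ℂ) * iteratedDeriv i f (η x) := by
      rw [Finset.sum_range_succ (n := j + 1)]
      rw [fdbCoef_zero η j (j + 1) (by omega)]
      simp [deriv_const]
    -- shift the second sum
    have hB : ∑ i ∈ Finset.range (j + 1),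
        ((fdbCoef η j i x : ℝ) : ℂ) * (deriv η x • iteratedDeriv (i + 1) f (η x))
        = ∑ i ∈ Finset.range (j + 2),
          (if i = 0 then 0 else
            ((fdbCoef η j (i - 1) x * deriv η x : ℝ) : ℂ) * iteratedDeriv i f (η x)) := by
      rw [Finset.sum_range_succ' _ (j + 1)]
      rw [if_pos rfl, add_zero]
      apply Finset.sum_congr rfl
      intro i _
      rw [if_neg (Nat.succ_ne_zero i), Nat.add_sub_cancel]
      push_cast [Complex.real_smul]
      ring
    rw [hA, hB, ← Finset.sum_add_distrib]
    apply Finset.sum_congr rfl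
    intro i _
    cases i with
    | zero =>
      show _ + _ = ((fdbCoef η (j + 1) 0 x : ℝ) : ℂ) * _
      show _ + _ = ((deriv (fdbCoef η j 0) x : ℝ) : ℂ) * _
      simp
    | succ i =>
      show _ + _ = ((fdbCoef η (j + 1) (i + 1) x : ℝ) : ℂ) * _
      show _ + _ = (((deriv (fdbCoef η j (i + 1)) x + fdbCoef η j i x * deriv η x : ℝ)) : ℂ) * _
      rw [if_neg (Nat.succ_ne_zero _)]
      simp only [Nat.add_sub_cancel]
      push_cast
      ring

/-- Change-of-variables formula for Wronskians:
`W[f₁∘η, …, fₙ∘η](x) = (η'(x))^(n(n-1)/2) · W[f₁, …, fₙ](η(x))`. -/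
theorem stmt_9 (n : ℕ) (hn : 1 ≤ n) (η : ℝ → ℝ) (f : Fin n → ℝ → ℂ)
    (hη : ContDiff ℝ (⊤ : ℕ∞) η) (hf : ∀ k, ContDiff ℝ (⊤ : ℕ∞) (f k)) :
    ∀ x : ℝ,
      wronskian n (fun k => (f k) ∘ η) x
        = ((deriv η x : ℝ) : ℂ) ^ (n * (n - 1) / 2) * wronskian n f (η x) := by
  intro x
  have hη' : ContDiff ℝ (⊤ : ℕ∞) η := hη.of_le (by simp)
  have hf' : ∀ k, ContDiff ℝ (⊤ : ℕ∞) (f k) := fun k => (hf k).of_le (by simp)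
  set L : Matrix (Fin n) (Fin n) ℂ :=
    Matrix.of (fun j i : Fin n => ((fdbCoef η (j : ℕ) (i : ℕ) x : ℝ) : ℂ)) with hL
  have hfactor : (Matrix.of fun j k : Fin n => iteratedDeriv (j : ℕ) ((f k) ∘ η) x)
      = L * (Matrix.of fun j k : Fin n => iteratedDeriv (j : ℕ) (f k) (η x)) := by
    ext j k
    rw [Matrix.of_apply, Matrix.mul_apply]
    rw [fdb_formula η hη' (f k) (hf' k) (j : ℕ) x]
    simp only [hL, Matrix.of_apply]
    symm
    rw [Fin.sum_univ_eq_sum_range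
        (fun i => ((fdbCoef η (j : ℕ) i x : ℝ) : ℂ) * iteratedDeriv i (f k) (η x)) n]
    symm
    apply Finset.sum_subset_zero_on_sdiff
    · intro i hi
      simp only [Finset.mem_range] at hi ⊢
      omega
    · intro i hi
      simp only [Finset.mem_sdiff, Finset.mem_range] at hi
      have : (j : ℕ) < i := by omega
      rw [fdbCoef_zero η (j : ℕ) i this]
      simp
    · intro i _
      rfl
  have hLdet : L.det = ((deriv η x : ℝ) : ℂ) ^ (n * (n - 1) / 2) := by
    have htri : L.BlockTriangular OrderDual.toDual := by
      intro i j hij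
      simp only [OrderDual.toDual_lt_toDual] at hij
      simp only [hL, Matrix.of_apply]
      rw [fdbCoef_zero η (i : ℕ) (j : ℕ) (by exact_mod_cast hij)]
      simp
    rw [Matrix.det_of_lowerTriangular L htri]
    have hdiag : ∀ j : Fin n, L j j = ((deriv η x : ℝ) : ℂ) ^ (j : ℕ) := by
      intro j
      simp only [hL, Matrix.of_apply]
      rw [fdbCoef_diag η (j : ℕ)]
      push_cast
      rfl
    rw [Finset.prod_congr rfl (fun j _ => hdiag j), Finset.prod_pow_eq_pow_sum]
    congr 1
    rw [Fin.sum_univ_eq_sum_range (fun i => i) n, Finset.sum_range_id]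
  unfold wronskian
  rw [hfactor, Matrix.det_mul, hLdet]
end

section
/- Let g, h ∈ ℝ and I = (0, π/2). Define U(x) := g(g−1)/sin²x + h(h−1)/cos²x − (g+h)², the operator (Hf)(x) := −f''(x) + U(x)f(x) acting on smooth functions f : I → ℂ, the function η(x) := cos 2x, and the commutator ([H,η]f)(x) := H(η·f)(x) − η(x)·(Hf)(x). Then for every smooth f : I → ℂ and all x ∈ I: H([H,η]f)(x) − ([H,η](Hf))(x) = 16·η(x)·( (Hf)(x) + ((g+h)² − 1)·f(x) ) + 8·([H,η]f)(x) + 16(g−h)(g+h−1)·f(x). -/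
open Real Set Filter ContDiff

/-- The Pöschl–Teller potential `U(x) = g(g-1)/sin²x + h(h-1)/cos²x - (g+h)²`. -/
noncomputable def ptU (g h : ℝ) (x : ℝ) : ℝ :=
  g * (g - 1) / (Real.sin x) ^ 2 + h * (h - 1) / (Real.cos x) ^ 2 - (g + h) ^ 2

/-- The Pöschl–Teller Hamiltonian `(H f)(x) = -f''(x) + U(x) f(x)`. -/
noncomputable def ptH (g h : ℝ) (f : ℝ → ℂ) : ℝ → ℂ :=
  fun x => -(deriv (deriv f) x) + ((ptU g h x : ℝ) : ℂ) * f x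

/-- The sinusoidal coordinate `η(x) = cos 2x`. -/
noncomputable def ptEta (x : ℝ) : ℝ := Real.cos (2 * x)

/-- The commutator `([H, η] f)(x) = H(η f)(x) - η(x) (H f)(x)`. -/
noncomputable def ptComm (g h : ℝ) (f : ℝ → ℂ) : ℝ → ℂ :=
  fun x => ptH g h (fun y => ((ptEta y : ℝ) : ℂ) * f y) x - ((ptEta x : ℝ) : ℂ) * ptH g h f x

/-- Derivative of the Pöschl–Teller potential. -/
noncomputable def uder (g h x : ℝ) : ℝ :=
  g*(g-1) * (-(2*Real.sin x*Real.cos x) / (Real.sin x^2)^2)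
  + h*(h-1) * (-(2*Real.cos x*(-Real.sin x)) / (Real.cos x^2)^2)

lemma hD1 (x : ℝ) : HasDerivAt (fun y => ((Real.cos (2*y) : ℝ) : ℂ)) (((-2*Real.sin (2*x)):ℝ):ℂ) x := by
  have h2 : HasDerivAt (fun y : ℝ => 2*y) 2 x := by simpa using (hasDerivAt_id x).const_mul (2:ℝ)
  have h3 : HasDerivAt (fun y => Real.cos (2*y)) (-2*Real.sin (2*x)) x := by
    have := h2.cos; convert this using 1; ring
  exact h3.ofReal_comp

lemma hD2 (x : ℝ) : HasDerivAt (fun y => ((Real.sin (2*y) : ℝ) : ℂ)) (((2*Real.cos (2*x)):ℝ):ℂ) x := by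
  have h2 : HasDerivAt (fun y : ℝ => 2*y) 2 x := by simpa using (hasDerivAt_id x).const_mul (2:ℝ)
  have h3 : HasDerivAt (fun y => Real.sin (2*y)) (2*Real.cos (2*x)) x := by
    have := h2.sin; convert this using 1; ring
  exact h3.ofReal_comp

lemma hD3 (x : ℝ) : HasDerivAt (fun y => (((-2*Real.sin (2*y)):ℝ):ℂ)) (((-4*Real.cos (2*x)):ℝ):ℂ) x := by
  have h2 : HasDerivAt (fun y : ℝ => 2*y) 2 x := by simpa using (hasDerivAt_id x).const_mul (2:ℝ)
  have h3 : HasDerivAt (fun y => -2*Real.sin (2*y)) (-4*Real.cos (2*x)) x := by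
    have := h2.sin.const_mul (-2:ℝ); exact this.congr_deriv (by ring)
  exact h3.ofReal_comp

lemma hD4 (x : ℝ) : HasDerivAt (fun y => (((2*Real.cos (2*y)):ℝ):ℂ)) (((-4*Real.sin (2*x)):ℝ):ℂ) x := by
  have h2 : HasDerivAt (fun y : ℝ => 2*y) 2 x := by simpa using (hasDerivAt_id x).const_mul (2:ℝ)
  have h3 : HasDerivAt (fun y => 2*Real.cos (2*y)) (-4*Real.sin (2*x)) x := by
    have := h2.cos.const_mul (2:ℝ); exact this.congr_deriv (by ring)
  exact h3.ofReal_comp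

lemma sin_ne_of_mem {x : ℝ} (hx : x ∈ Set.Ioo 0 (Real.pi/2)) : Real.sin x ≠ 0 :=
  ne_of_gt (Real.sin_pos_of_pos_of_lt_pi hx.1 (lt_trans hx.2 (by linarith [Real.pi_pos])))

lemma cos_ne_of_mem {x : ℝ} (hx : x ∈ Set.Ioo 0 (Real.pi/2)) : Real.cos x ≠ 0 :=
  ne_of_gt (Real.cos_pos_of_mem_Ioo ⟨by linarith [hx.1, Real.pi_pos], hx.2⟩)

lemma hasDerivAt_ptU (g h : ℝ) {x : ℝ} (hs : Real.sin x ≠ 0) (hc : Real.cos x ≠ 0) :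
    HasDerivAt (ptU g h) (uder g h x) x := by
  have hsin2 : HasDerivAt (fun y => Real.sin y ^ 2) (2*Real.sin x*Real.cos x) x := by
    simpa [pow_one] using (Real.hasDerivAt_sin x).fun_pow 2
  have hcos2 : HasDerivAt (fun y => Real.cos y ^ 2) (2*Real.cos x*(-Real.sin x)) x := by
    simpa [pow_one] using (Real.hasDerivAt_cos x).fun_pow 2
  have h1 := (hsin2.inv (pow_ne_zero 2 hs)).const_mul (g*(g-1))
  have h2 := (hcos2.inv (pow_ne_zero 2 hc)).const_mul (h*(h-1))
  have := (h1.add h2).sub_const ((g+h)^2)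
  show HasDerivAt (fun y => ptU g h y) _ x
  simpa [ptU, uder, div_eq_mul_inv] using this

lemma contDiffOn_ptU (g h : ℝ) :
    ContDiffOn ℝ ∞ (ptU g h) (Set.Ioo 0 (Real.pi/2)) := by
  have h1 : ContDiffOn ℝ ∞ (fun x => g*(g-1) / Real.sin x ^ 2) (Set.Ioo 0 (Real.pi/2)) :=
    contDiffOn_const.div ((Real.contDiff_sin.pow 2).contDiffOn)
      (fun x hx => pow_ne_zero 2 (sin_ne_of_mem hx))
  have h2 : ContDiffOn ℝ ∞ (fun x => h*(h-1) / Real.cos x ^ 2) (Set.Ioo 0 (Real.pi/2)) :=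
    contDiffOn_const.div ((Real.contDiff_cos.pow 2).contDiffOn)
      (fun x hx => pow_ne_zero 2 (cos_ne_of_mem hx))
  exact (h1.add h2).sub contDiffOn_const

lemma comm_eq (g h : ℝ) {p : ℝ → ℂ} (hp : ContDiffOn ℝ ∞ p (Set.Ioo 0 (Real.pi/2)))
    {x : ℝ} (hx : x ∈ Set.Ioo 0 (Real.pi/2)) :
    ptComm g h p x
      = 4 * (((Real.cos (2*x) : ℝ) : ℂ) * p x) + 4 * (((Real.sin (2*x) : ℝ) : ℂ) * deriv p x) := by
  set s := Set.Ioo (0:ℝ) (Real.pi/2) with hsdef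
  have hopen : IsOpen s := isOpen_Ioo
  have dp : ∀ y ∈ s, HasDerivAt p (deriv p y) y := fun y hy =>
    ((hp.differentiableOn (by simp)).differentiableAt (hopen.mem_nhds hy)).hasDerivAt
  have hp1 : ContDiffOn ℝ ∞ (deriv p) s := hp.deriv_of_isOpen hopen le_rfl
  have dp1 : ∀ y ∈ s, HasDerivAt (deriv p) (deriv (deriv p) y) y := fun y hy =>
    ((hp1.differentiableOn (by simp)).differentiableAt (hopen.mem_nhds hy)).hasDerivAt
  have hq : ∀ y ∈ s, HasDerivAt (fun z => ((Real.cos (2*z) : ℝ) : ℂ) * p z)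
      ((((-2*Real.sin (2*y)):ℝ):ℂ) * p y + ((Real.cos (2*y):ℝ):ℂ) * deriv p y) y :=
    fun y hy => (hD1 y).mul (dp y hy)
  have hdq : Set.EqOn (deriv (fun z => ((Real.cos (2*z) : ℝ) : ℂ) * p z))
      (fun y => (((-2*Real.sin (2*y)):ℝ):ℂ) * p y + ((Real.cos (2*y):ℝ):ℂ) * deriv p y) s :=
    fun y hy => (hq y hy).deriv
  have hq2 : HasDerivAt
      (fun y => (((-2*Real.sin (2*y)):ℝ):ℂ) * p y + ((Real.cos (2*y):ℝ):ℂ) * deriv p y)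
      (((((-4*Real.cos (2*x)):ℝ):ℂ) * p x + (((-2*Real.sin (2*x)):ℝ):ℂ) * deriv p x)
        + ((((-2*Real.sin (2*x)):ℝ):ℂ) * deriv p x + ((Real.cos (2*x):ℝ):ℂ) * deriv (deriv p) x)) x :=
    ((hD3 x).mul (dp x hx)).add ((hD1 x).mul (dp1 x hx))
  have hqq : deriv (deriv (fun z => ((Real.cos (2*z) : ℝ) : ℂ) * p z)) x
      = ((((-4*Real.cos (2*x)):ℝ):ℂ) * p x + (((-2*Real.sin (2*x)):ℝ):ℂ) * deriv p x)
        + ((((-2*Real.sin (2*x)):ℝ):ℂ) * deriv p x + ((Real.cos (2*x):ℝ):ℂ) * deriv (deriv p) x) :=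
    ((Filter.eventuallyEq_of_mem (hopen.mem_nhds hx) hdq).deriv_eq).trans hq2.deriv
  simp only [ptComm, ptH, ptEta, hqq]
  push_cast
  ring

/-- Closure relation `[H,[H,η]] = η R₀(H) + [H,η] R₁(H) + R₋₁(H)` for the Pöschl–Teller
Hamiltonian with sinusoidal coordinate `η(x) = cos 2x`, where `R₁(y) = 8`,
`R₀(y) = 16 (y + (g+h)² - 1)` and `R₋₁(y) = 16 (g-h)(g+h-1)`. -/
theorem stmt_11 (g h : ℝ) :
    ∀ (f : ℝ → ℂ), ContDiffOn ℝ (⊤ : ℕ∞) f (Set.Ioo 0 (Real.pi / 2)) →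
      ∀ x ∈ Set.Ioo 0 (Real.pi / 2),
        ptH g h (ptComm g h f) x - ptComm g h (ptH g h f) x
          = 16 * ((ptEta x : ℝ) : ℂ) * (ptH g h f x + (((g + h) ^ 2 - 1 : ℝ) : ℂ) * f x)
            + 8 * ptComm g h f x
            + (((16 * (g - h) * (g + h - 1) : ℝ)) : ℂ) * f x := by
  intro f hf0 x hx
  set s := Set.Ioo (0:ℝ) (Real.pi/2) with hsdef
  have hopen : IsOpen s := isOpen_Ioo
  have hf : ContDiffOn ℝ ∞ f s := hf0.of_le (by simp)
  have hf1 : ContDiffOn ℝ ∞ (deriv f) s := hf.deriv_of_isOpen hopen le_rfl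
  have hf2 : ContDiffOn ℝ ∞ (deriv (deriv f)) s := hf1.deriv_of_isOpen hopen le_rfl
  have df : ∀ y ∈ s, HasDerivAt f (deriv f y) y := fun y hy =>
    ((hf.differentiableOn (by simp)).differentiableAt (hopen.mem_nhds hy)).hasDerivAt
  have df1 : ∀ y ∈ s, HasDerivAt (deriv f) (deriv (deriv f) y) y := fun y hy =>
    ((hf1.differentiableOn (by simp)).differentiableAt (hopen.mem_nhds hy)).hasDerivAt
  have df2 : ∀ y ∈ s, HasDerivAt (deriv (deriv f)) (deriv (deriv (deriv f)) y) y := fun y hy =>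
    ((hf2.differentiableOn (by simp)).differentiableAt (hopen.mem_nhds hy)).hasDerivAt
  have hsx := sin_ne_of_mem hx
  have hcx := cos_ne_of_mem hx
  have hUC : HasDerivAt (fun y => ((ptU g h y : ℝ) : ℂ)) ((uder g h x : ℝ) : ℂ) x :=
    (hasDerivAt_ptU g h hsx hcx).ofReal_comp
  have hUsm : ContDiffOn ℝ ∞ (fun y => ((ptU g h y : ℝ) : ℂ)) s :=
    Complex.ofRealCLM.contDiff.comp_contDiffOn (contDiffOn_ptU g h)
  have hHsm : ContDiffOn ℝ ∞ (ptH g h f) s := hf2.neg.add (hUsm.mul hf)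
  -- closed form of the commutator of f
  have hAeq : Set.EqOn (ptComm g h f)
      (fun y => 4 * (((Real.cos (2*y) : ℝ) : ℂ) * f y)
        + 4 * (((Real.sin (2*y) : ℝ) : ℂ) * deriv f y)) s :=
    fun y hy => comm_eq g h hf hy
  have hG1 : ∀ y ∈ s, HasDerivAt
      (fun y => 4 * (((Real.cos (2*y) : ℝ) : ℂ) * f y)
        + 4 * (((Real.sin (2*y) : ℝ) : ℂ) * deriv f y))
      (4 * ((((-2*Real.sin (2*y)):ℝ):ℂ) * f y + ((Real.cos (2*y):ℝ):ℂ) * deriv f y)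
        + 4 * ((((2*Real.cos (2*y)):ℝ):ℂ) * deriv f y + ((Real.sin (2*y):ℝ):ℂ) * deriv (deriv f) y)) y :=
    fun y hy => (((hD1 y).mul (df y hy)).const_mul 4).add (((hD2 y).mul (df1 y hy)).const_mul 4)
  have hDG : Set.EqOn
      (deriv (fun y => 4 * (((Real.cos (2*y) : ℝ) : ℂ) * f y)
        + 4 * (((Real.sin (2*y) : ℝ) : ℂ) * deriv f y)))
      (fun y => 4 * ((((-2*Real.sin (2*y)):ℝ):ℂ) * f y + ((Real.cos (2*y):ℝ):ℂ) * deriv f y)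
        + 4 * ((((2*Real.cos (2*y)):ℝ):ℂ) * deriv f y + ((Real.sin (2*y):ℝ):ℂ) * deriv (deriv f) y)) s :=
    fun y hy => (hG1 y hy).deriv
  have hG2 : HasDerivAt
      (fun y => 4 * ((((-2*Real.sin (2*y)):ℝ):ℂ) * f y + ((Real.cos (2*y):ℝ):ℂ) * deriv f y)
        + 4 * ((((2*Real.cos (2*y)):ℝ):ℂ) * deriv f y + ((Real.sin (2*y):ℝ):ℂ) * deriv (deriv f) y))
      (4 * (((((-4*Real.cos (2*x)):ℝ):ℂ) * f x + (((-2*Real.sin (2*x)):ℝ):ℂ) * deriv f x)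
          + ((((-2*Real.sin (2*x)):ℝ):ℂ) * deriv f x + ((Real.cos (2*x):ℝ):ℂ) * deriv (deriv f) x))
        + 4 * (((((-4*Real.sin (2*x)):ℝ):ℂ) * deriv f x + (((2*Real.cos (2*x)):ℝ):ℂ) * deriv (deriv f) x)
          + ((((2*Real.cos (2*x)):ℝ):ℂ) * deriv (deriv f) x + ((Real.sin (2*x):ℝ):ℂ) * deriv (deriv (deriv f)) x))) x :=
    ((((hD3 x).mul (df x hx)).add ((hD1 x).mul (df1 x hx))).const_mul (4:ℂ)).add
      ((((hD4 x).mul (df1 x hx)).add ((hD2 x).mul (df2 x hx))).const_mul (4:ℂ))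
  have hAG : ptComm g h f =ᶠ[nhds x]
      (fun y => 4 * (((Real.cos (2*y) : ℝ) : ℂ) * f y)
        + 4 * (((Real.sin (2*y) : ℝ) : ℂ) * deriv f y)) :=
    Filter.eventuallyEq_of_mem (hopen.mem_nhds hx) hAeq
  have key1 : deriv (deriv (ptComm g h f)) x
      = 4 * (((((-4*Real.cos (2*x)):ℝ):ℂ) * f x + (((-2*Real.sin (2*x)):ℝ):ℂ) * deriv f x)
          + ((((-2*Real.sin (2*x)):ℝ):ℂ) * deriv f x + ((Real.cos (2*x):ℝ):ℂ) * deriv (deriv f) x))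
        + 4 * (((((-4*Real.sin (2*x)):ℝ):ℂ) * deriv f x + (((2*Real.cos (2*x)):ℝ):ℂ) * deriv (deriv f) x)
          + ((((2*Real.cos (2*x)):ℝ):ℂ) * deriv (deriv f) x + ((Real.sin (2*x):ℝ):ℂ) * deriv (deriv (deriv f)) x)) :=
    (hAG.deriv.deriv_eq).trans
      (((Filter.eventuallyEq_of_mem (hopen.mem_nhds hx) hDG).deriv_eq).trans hG2.deriv)
  have hHd : HasDerivAt (ptH g h f)
      (-(deriv (deriv (deriv f)) x) + (((uder g h x : ℝ) : ℂ) * f x + ((ptU g h x : ℝ) : ℂ) * deriv f x)) x :=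
    ((df2 x hx).neg).add (hUC.mul (df x hx))
  have hkey : 16*Real.cos (2*x) - 4*Real.sin (2*x) * uder g h x
      = 16*Real.cos (2*x)*(ptU g h x) + 16*Real.cos (2*x)*((g+h)^2-1)
        + 32*Real.cos (2*x) + 16*(g-h)*(g+h-1) := by
    rw [Real.sin_two_mul, Real.cos_two_mul']
    simp only [ptU, uder]
    field_simp
    ring
  have hkeyC := congrArg (fun t : ℝ => (t : ℂ)) hkey
  push_cast at hkeyC
  have e2 := comm_eq g h hHsm hx
  rw [hHd.deriv] at e2
  have e1 : ptH g h (ptComm g h f) x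
      = -(deriv (deriv (ptComm g h f)) x) + ((ptU g h x : ℝ) : ℂ) * ptComm g h f x := rfl
  rw [e1, key1, hAeq hx, e2]
  beta_reduce
  simp only [ptH, ptEta]
  push_cast
  linear_combination hkeyC * f x
end

section
/- Let N ≥ 1, let 0 < k₁ < k₂ < ⋯ < k_N be real numbers, and let c̃₁, …, c̃_N ∈ ℝ satisfy (−1)^{j−1}·c̃ⱼ > 0 for j = 1,…,N. Define ψⱼ(x) := e^{kⱼx} + c̃ⱼ·e^{−kⱼx}. Then W[ψ₁, …, ψ_N](x) > 0 for all x ∈ ℝ. -/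
/-!
Since `ψ_m^{(j)}(x) = k_m^j e^{k_m x} + c_m (-k_m)^j e^{-k_m x}`, row `m` of the transposed
Wronskian matrix is `e^{k_m x} V(k)_m + c_m e^{-k_m x} V(-k)_m`, with `V` the Vandermonde matrix.
Expanding the determinant multilinearly in the rows gives a sum over the sets `s` of rows taking
the first summand; each term is a product of the coefficients times the Vandermonde determinant at
the nodes `v = s.piecewise k (-k)`. Grouping the factors `v_m - v_i` (`i < m`) with row `m`: as
`|v_i| = k_i < k_m`, they are all positive if `m ∈ s`, and all negative if `m ∉ s`, where their
sign `(-1)^m` is that of `c_m`. Hence every term is positive.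
-/

/-- The Wronskian of `n` real functions: determinant of the matrix whose `(j,k)` entry is the
`j`-th derivative (0-based) of the `k`-th function. -/
noncomputable def wronskianR (n : ℕ) (f : Fin n → ℝ → ℝ) (x : ℝ) : ℝ :=
  (Matrix.of fun j k : Fin n => iteratedDeriv (j : ℕ) (f k) x).det

open Finset Matrix

theorem Matrix.det_of_add_mul_rows {R n : Type*} [CommRing R] [Fintype n] [DecidableEq n]
    (p q : n → R) (A B : Matrix n n R) :
    det (of fun i j => p i * A i j + q i * B i j) =
      ∑ s : Finset n, (∏ i, if i ∈ s then p i else q i) *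
        det (of fun i j => if i ∈ s then A i j else B i j) := by
  let D : MultilinearMap R (fun _ : n => n → R) R := detRowAlternating.toMultilinearMap
  calc det (of fun i j => p i * A i j + q i * B i j)
      = D ((fun i => p i • A i) + fun i => q i • B i) := rfl
    _ = ∑ s : Finset n, D (s.piecewise (fun i => p i • A i) fun i => q i • B i) :=
        D.map_add_univ _ _
    _ = _ := sum_congr rfl fun s _ => by
        have : s.piecewise (fun i => p i • A i) (fun i => q i • B i) =
            fun i => (if i ∈ s then p i else q i) • fun j => if i ∈ s then A i j else B i j := by
          ext i : 1
          by_cases hi : i ∈ s <;> simp [hi]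
        rw [this, D.map_smul_univ, smul_eq_mul]
        rfl

theorem Matrix.of_ite_vandermonde {R : Type*} [CommRing R] {n : ℕ} (s : Finset (Fin n))
    (α β : Fin n → R) :
    of (fun i j => if i ∈ s then vandermonde α i j else vandermonde β i j) =
      vandermonde (s.piecewise α β) := by
  ext i j
  by_cases hi : i ∈ s <;> simp [hi]

theorem iteratedDeriv_exp_const_mul_add_const_mul_exp (n : ℕ) (a b q x : ℝ) :
    iteratedDeriv n (fun y => Real.exp (a * y) + q * Real.exp (b * y)) x =
      a ^ n * Real.exp (a * x) + q * (b ^ n * Real.exp (b * x)) := by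
  rw [iteratedDeriv_fun_add (by fun_prop) (by fun_prop), iteratedDeriv_const_mul_field]
  simp

section

variable {N : ℕ} {k : Fin N → ℝ}

theorem abs_piecewise_neg_lt (hk0 : ∀ j, 0 < k j) (hk : StrictMono k) (s : Finset (Fin N))
    {i j : Fin N} (hij : i < j) : |s.piecewise k (-k) i| < k j := by
  have : |s.piecewise k (-k) i| = k i := by
    by_cases hi : i ∈ s <;> simp [hi, abs_of_pos (hk0 i)]
  exact this ▸ hk hij

theorem prod_mul_det_vandermonde_piecewise_neg_pos (hk0 : ∀ j, 0 < k j) (hk : StrictMono k)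
    (s : Finset (Fin N)) (e : Fin N → ℝ) (he_mem : ∀ j ∈ s, 0 < e j)
    (he_not_mem : ∀ j ∉ s, 0 < (-1) ^ (j : ℕ) * e j) :
    0 < (∏ j, e j) * det (vandermonde (s.piecewise k (-k))) := by
  set v := s.piecewise k (-k)
  have hv : ∀ {i j}, i < j → -k j < v i ∧ v i < k j := fun hij =>
    abs_lt.mp (abs_piecewise_neg_lt hk0 hk s hij)
  rw [det_vandermonde, prod_comm' (t' := univ) (s' := fun j => Iio j) (by simp),
    ← prod_mul_distrib]
  refine prod_pos fun j _ => ?_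
  by_cases hj : j ∈ s
  · have hvj : v j = k j := s.piecewise_eq_of_mem _ _ hj
    refine mul_pos (he_mem j hj) (prod_pos fun i hi => ?_)
    linarith [hv (mem_Iio.mp hi)]
  · have hvj : v j = -k j := s.piecewise_eq_of_notMem _ _ hj
    -- all `j` factors `v j - v i` are negative
    have hsign : ∏ i ∈ Iio j, (v j - v i) = (-1) ^ (j : ℕ) * ∏ i ∈ Iio j, (v i - v j) := by
      rw [← Fin.card_Iio j, ← prod_neg]
      simp only [neg_sub]
    rw [hsign, mul_left_comm, ← mul_assoc]
    refine mul_pos (he_not_mem j hj) (prod_pos fun i hi => ?_)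
    linarith [hv (mem_Iio.mp hi)]

end

theorem stmt_15_general (N : ℕ) (k c : Fin N → ℝ)
    (hk0 : ∀ j, 0 < k j) (hkmono : StrictMono k)
    (hc : ∀ j : Fin N, 0 < (-1 : ℝ) ^ (j : ℕ) * c j) :
    ∀ x : ℝ,
      0 < wronskianR N
        (fun j => fun y => Real.exp (k j * y) + c j * Real.exp (-(k j) * y)) x := by
  intro x
  have hW : wronskianR N
      (fun j => fun y => Real.exp (k j * y) + c j * Real.exp (-(k j) * y)) x =
      det (of fun j i => Real.exp (k j * x) * vandermonde k j i +
        c j * Real.exp (-k j * x) * vandermonde (-k) j i)ᵀ := by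
    rw [wronskianR]
    congr 1
    ext i j
    simp only [iteratedDeriv_exp_const_mul_add_const_mul_exp, vandermonde_apply, of_apply,
      transpose_apply, Pi.neg_apply]
    ring
  rw [hW, det_transpose, det_of_add_mul_rows]
  refine sum_pos (fun s _ => ?_) univ_nonempty
  rw [of_ite_vandermonde]
  refine prod_mul_det_vandermonde_piecewise_neg_pos hk0 hkmono s _ (fun j hj => ?_) fun j hj => ?_
  · simpa [hj] using Real.exp_pos _
  · rw [if_neg hj, ← mul_assoc]
    exact mul_pos (hc j) (Real.exp_pos _)

/-- Positivity of the Wronskian of the seed solutions `ψⱼ(x) = e^{kⱼx} + c̃ⱼ e^{-kⱼx}` with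
`0 < k₁ < ⋯ < k_N` and alternating signs `(-1)^{j-1} c̃ⱼ > 0` (indices `j` here 0-based): this
guarantees that the `N`-bound-state reflectionless potential is nonsingular on ℝ. -/
theorem stmt_15 (N : ℕ) (hN : 1 ≤ N) (k c : Fin N → ℝ)
    (hk0 : ∀ j, 0 < k j) (hkmono : StrictMono k)
    (hc : ∀ j : Fin N, 0 < (-1 : ℝ) ^ (j : ℕ) * c j) :
    ∀ x : ℝ,
      0 < wronskianR N
        (fun j => fun y => Real.exp (k j * y) + c j * Real.exp (-(k j) * y)) x :=
  stmt_15_general N k c hk0 hkmono hc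
end

section
/- Let N ≥ 1, let 0 < k₁ < ⋯ < k_N be real numbers, let c̃₁, …, c̃_N ∈ ℝ satisfy (−1)^{j−1}·c̃ⱼ > 0, define ψⱼ(x) := e^{kⱼx} + c̃ⱼ·e^{−kⱼx}, and let k > 0 be real. Then the function F(x) := e^{−ikx} · W[ψ₁, …, ψ_N, x↦e^{ikx}](x) / W[ψ₁, …, ψ_N](x) satisfies: F(x) → ∏_{j=1}^{N}(ik − kⱼ) as x → +∞, and F(x) → ∏_{j=1}^{N}(ik + kⱼ) as x → −∞. -/
/-!
Each seed is an exponential sum `∑_b a_b e^{w_b x}`. Expanding the determinant multilinearly in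
the rows of the transposed Wronskian matrix gives `W[ψ](x) = ∑_ε (∏ a) V(w_ε) e^{(∑ w_ε) x}`, a sum
over the choices `ε` of one exponential per seed, `V` being the Vandermonde determinant; appending
the plane wave `e^{μx}` multiplies the term of `ε` by `e^{μx} ∏ (μ - w_ε)`. So `F` is a quotient of
two exponential sums with the same exponents and coefficients differing by the factors
`∏ (μ - w_ε)`. Since `kⱼ > 0`, the real exponent `∑ ±kⱼ` is uniquely maximal (minimal) at
`ε ≡ e^{kⱼx}` (resp. `ε ≡ c̃ⱼ e^{-kⱼx}`), so as `x → +∞` (resp. `-∞`) that term dominates both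
sums; its coefficient `V(k)` (resp. `∏ c̃ⱼ · V(-k)`) is nonzero because the `kⱼ` are distinct
and the `c̃ⱼ` nonzero.
-/

open Filter Finset Complex Matrix Topology

section ExpSum

variable {β : Type*} [Fintype β]

noncomputable def expSum (a w : β → ℂ) (y : ℝ) : ℂ :=
  ∑ b, a b * cexp (w b * y)

theorem hasDerivAt_expSum (a w : β → ℂ) (x : ℝ) :
    HasDerivAt (expSum a w) (expSum (a * w) w x) x := by
  have hexp (b : β) : HasDerivAt (fun y : ℝ => cexp (w b * y)) (cexp (w b * x) * w b) x :=
    (((hasDerivAt_id x).ofReal_comp).const_mul (w b)).cexp.congr_deriv (by simp)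
  refine (HasDerivAt.fun_sum (u := univ) fun b _ => (hexp b).const_mul (a b)).congr_deriv ?_
  exact sum_congr rfl fun b _ => by simp only [Pi.mul_apply]; ring

theorem iteratedDeriv_expSum (a w : β → ℂ) (n : ℕ) :
    iteratedDeriv n (expSum a w) = expSum (a * w ^ n) w := by
  induction n with
  | zero => simp
  | succ n ih =>
    ext x
    rw [iteratedDeriv_succ, ih, (hasDerivAt_expSum _ w x).deriv, pow_succ, mul_assoc]

end ExpSum

theorem MultilinearMap.map_sum_smul {R ι β M N : Type*} [CommSemiring R] [Fintype ι]
    [DecidableEq ι] [Fintype β] [AddCommMonoid M] [Module R M] [AddCommMonoid N] [Module R N]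
    (g : MultilinearMap R (fun _ : ι => M) N) (c : ι → β → R) (v : ι → β → M) :
    g (fun i => ∑ b, c i b • v i b) = ∑ ε : ι → β, (∏ i, c i (ε i)) • g fun i => v i (ε i) := by
  rw [g.map_sum]
  exact sum_congr rfl fun ε _ => g.map_smul_univ _ _

theorem Matrix.det_vandermonde_snoc {R : Type*} [CommRing R] {n : ℕ} (v : Fin n → R) (a : R) :
    (vandermonde (Fin.snoc v a : Fin (n + 1) → R)).det = (vandermonde v).det * ∏ i, (a - v i) := by
  have hIoi (i : Fin n) :
      Ioi i.castSucc = insert (Fin.last n) ((Ioi i).map Fin.castSuccEmb) := by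
    rw [Fin.map_castSuccEmb_Ioi, Finset.Ioo_insert_right (Fin.castSucc_lt_last i)]
    exact Finset.Ioc_top
  rw [det_vandermonde, det_vandermonde, Fin.prod_univ_castSucc, ← Fin.top_eq_last, Ioi_top,
    prod_empty, mul_one, ← prod_mul_distrib]
  refine prod_congr rfl fun i _ => ?_
  rw [hIoi, prod_insert (by simp), prod_map, mul_comm]
  simp

theorem Matrix.det_of_eq_detRowAlternating {R ι : Type*} [CommRing R] [Fintype ι] [DecidableEq ι]
    (r : ι → ι → R) : (of r).det = detRowAlternating.toMultilinearMap r := rfl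

section Wronskian

variable {β : Type*} [Fintype β] {n : ℕ}

theorem wronskian_expSum (a w : Fin n → β → ℂ) (x : ℝ) :
    wronskian n (fun k => expSum (a k) (w k)) x = ∑ ε : Fin n → β,
      (∏ k, a k (ε k)) * (vandermonde fun k => w k (ε k)).det * cexp ((∑ k, w k (ε k)) * x) := by
  have hrows : (of fun j k : Fin n => iteratedDeriv j (expSum (a k) (w k)) x)ᵀ =
      of fun k => ∑ b, (a k b * cexp (w k b * x)) • fun j : Fin n => w k b ^ (j : ℕ) := by
    ext k j
    simp [iteratedDeriv_expSum, expSum, Finset.sum_apply, mul_right_comm]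
  rw [wronskian, ← det_transpose, hrows, det_of_eq_detRowAlternating, MultilinearMap.map_sum_smul]
  refine sum_congr rfl fun ε _ => ?_
  rw [smul_eq_mul, ← det_of_eq_detRowAlternating]
  change _ * (vandermonde fun k => w k (ε k)).det = _
  rw [prod_mul_distrib, sum_mul, exp_sum]
  ring

theorem wronskian_snoc_expSum (a w : Fin n → β → ℂ) (μ : ℂ) (x : ℝ) :
    wronskian (n + 1) (Fin.snoc (fun k => expSum (a k) (w k)) fun y => cexp (μ * y)) x =
      ∑ ε : Fin n → β, (∏ k, a k (ε k)) * (vandermonde (Fin.snoc (fun k => w k (ε k)) μ)).det *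
        cexp ((∑ k, w k (ε k) + μ) * x) := by
  set v : ℂ → Fin (n + 1) → ℂ := fun t j => t ^ (j : ℕ)
  have hwave (j : ℕ) : iteratedDeriv j (fun y : ℝ => cexp (μ * y)) x = μ ^ j * cexp (μ * x) := by
    have hsum : (fun y : ℝ => cexp (μ * y)) = expSum (fun _ : Unit => 1) fun _ => μ := by
      ext y; simp [expSum]
    simp [hsum, iteratedDeriv_expSum, expSum]
  have hrows : (of fun j k : Fin (n + 1) =>
      iteratedDeriv j ((Fin.snoc (fun k => expSum (a k) (w k)) fun y => cexp (μ * y) :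
        Fin (n + 1) → ℝ → ℂ) k) x)ᵀ =
      of (Fin.snoc (fun k => ∑ b, (a k b * cexp (w k b * x)) • v (w k b)) (cexp (μ * x) • v μ)) := by
    ext k j
    cases k using Fin.lastCases with
    | last => simp [hwave, v, mul_comm]
    | cast k => simp [iteratedDeriv_expSum, expSum, Finset.sum_apply, v, mul_right_comm]
  -- the plane-wave row is a single term: expand only the first `n` rows, via `curryRight`
  rw [wronskian, ← det_transpose, hrows, det_of_eq_detRowAlternating,
    ← MultilinearMap.curryRight_apply]
  change ((LinearMap.applyₗ (cexp (μ * x) • v μ)).compMultilinearMap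
    (detRowAlternating.toMultilinearMap.curryRight)) _ = _
  rw [MultilinearMap.map_sum_smul]
  refine sum_congr rfl fun ε _ => ?_
  have hv : Fin.snoc (fun k => v (w k (ε k))) (v μ) = v ∘ Fin.snoc (fun k => w k (ε k)) μ :=
    (Fin.comp_snoc v _ μ).symm
  rw [LinearMap.compMultilinearMap_apply, LinearMap.applyₗ_apply_apply, map_smul,
    MultilinearMap.curryRight_apply, hv, ← det_of_eq_detRowAlternating, smul_eq_mul, smul_eq_mul]
  change _ * (_ * (vandermonde (Fin.snoc (fun k => w k (ε k)) μ)).det) = _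
  rw [prod_mul_distrib, add_mul, exp_add, sum_mul, exp_sum]
  ring

end Wronskian

theorem tendsto_cexp_mul_atTop_nhds_zero {z : ℂ} (hz : z.re < 0) :
    Tendsto (fun x : ℝ => cexp (z * x)) atTop (𝓝 0) := by
  rw [Complex.tendsto_exp_nhds_zero_iff]
  simp only [re_mul_ofReal]
  exact tendsto_id.const_mul_atTop_of_neg hz

section Dominance

variable {ι : Type*} [Fintype ι]

theorem tendsto_cexp_neg_mul_sum_atTop (D L : ι → ℂ) {ε₀ : ι}
    (hL : ∀ ε ≠ ε₀, (L ε).re < (L ε₀).re) :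
    Tendsto (fun x : ℝ => cexp (-(L ε₀ * x)) * ∑ ε, D ε * cexp (L ε * x)) atTop (𝓝 (D ε₀)) := by
  classical
  have hterm (ε : ι) : Tendsto (fun x : ℝ => D ε * cexp ((L ε - L ε₀) * x)) atTop
      (𝓝 (if ε = ε₀ then D ε₀ else 0)) := by
    split_ifs with h
    · subst h
      simp
    · simpa using (tendsto_cexp_mul_atTop_nhds_zero (by simpa using hL ε h)).const_mul (D ε)
  have hsum := tendsto_finsetSum univ fun ε _ => hterm ε
  rw [sum_ite_eq' univ ε₀, if_pos (mem_univ _)] at hsum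
  refine hsum.congr fun x => ?_
  rw [mul_sum]
  refine sum_congr rfl fun ε _ => ?_
  rw [mul_left_comm, ← exp_add]
  ring_nf

theorem tendsto_sum_mul_cexp_div_sum_cexp_atTop (C P L : ι → ℂ) {ε₀ : ι} (hC : C ε₀ ≠ 0)
    (hL : ∀ ε ≠ ε₀, (L ε).re < (L ε₀).re) :
    Tendsto (fun x : ℝ => (∑ ε, C ε * P ε * cexp (L ε * x)) / ∑ ε, C ε * cexp (L ε * x))
      atTop (𝓝 (P ε₀)) := by
  have h := (tendsto_cexp_neg_mul_sum_atTop (C * P) L hL).div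
    (tendsto_cexp_neg_mul_sum_atTop C L hL) hC
  rw [Pi.mul_apply, mul_div_cancel_left₀ _ hC] at h
  exact h.congr fun x => mul_div_mul_left _ _ (exp_ne_zero _)

theorem tendsto_sum_mul_cexp_div_sum_cexp_atBot (C P L : ι → ℂ) {ε₀ : ι} (hC : C ε₀ ≠ 0)
    (hL : ∀ ε ≠ ε₀, (L ε₀).re < (L ε).re) :
    Tendsto (fun x : ℝ => (∑ ε, C ε * P ε * cexp (L ε * x)) / ∑ ε, C ε * cexp (L ε * x))
      atBot (𝓝 (P ε₀)) := by
  rw [← tendsto_comp_neg_atTop_iff]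
  refine (tendsto_sum_mul_cexp_div_sum_cexp_atTop C P (-L) hC (by simpa using hL)).congr
    fun x => ?_
  simp only [Pi.neg_apply, ofReal_neg, neg_mul, mul_neg]

theorem sum_lt_sum_const_of_ne {M β : Type*} [AddCommMonoid M] [PartialOrder M]
    [IsOrderedCancelAddMonoid M] {ℓ : ι → β → M} {b₀ : β} (h : ∀ i b, b ≠ b₀ → ℓ i b < ℓ i b₀)
    {ε : ι → β} (hε : ε ≠ fun _ => b₀) : ∑ i, ℓ i (ε i) < ∑ i, ℓ i b₀ := by
  obtain ⟨i, hi⟩ := Function.ne_iff.mp hε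
  refine sum_lt_sum (fun j _ => ?_) ⟨i, mem_univ i, h i _ hi⟩
  by_cases hj : ε j = b₀
  · rw [hj]
  · exact (h j _ hj).le

end Dominance

section Darboux

variable {β : Type*} [Fintype β] {n : ℕ} (a w : Fin n → β → ℂ) (μ : ℂ)

theorem cexp_mul_wronskian_snoc_div_wronskian (x : ℝ) :
    cexp (-(μ * x)) *
        wronskian (n + 1) (Fin.snoc (fun k => expSum (a k) (w k)) fun y => cexp (μ * y)) x /
        wronskian n (fun k => expSum (a k) (w k)) x =
      (∑ ε : Fin n → β, (∏ k, a k (ε k)) * (vandermonde fun k => w k (ε k)).det *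
          (∏ k, (μ - w k (ε k))) * cexp ((∑ k, w k (ε k)) * x)) /
        ∑ ε : Fin n → β, (∏ k, a k (ε k)) * (vandermonde fun k => w k (ε k)).det *
          cexp ((∑ k, w k (ε k)) * x) := by
  rw [wronskian_snoc_expSum, wronskian_expSum, mul_sum]
  congr 1
  refine sum_congr rfl fun ε _ => ?_
  rw [det_vandermonde_snoc, add_mul, exp_add, exp_neg]
  field_simp

theorem tendsto_cexp_mul_wronskian_snoc_div_wronskian_atTop (b₀ : β) (ha : ∀ k, a k b₀ ≠ 0)
    (hinj : Function.Injective fun k => w k b₀) (hdom : ∀ k b, b ≠ b₀ → (w k b).re < (w k b₀).re) :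
    Tendsto (fun x : ℝ => cexp (-(μ * x)) *
        wronskian (n + 1) (Fin.snoc (fun k => expSum (a k) (w k)) fun y => cexp (μ * y)) x /
        wronskian n (fun k => expSum (a k) (w k)) x) atTop (𝓝 (∏ k, (μ - w k b₀))) := by
  simp_rw [cexp_mul_wronskian_snoc_div_wronskian]
  refine tendsto_sum_mul_cexp_div_sum_cexp_atTop _ _ _ (ε₀ := fun _ => b₀)
    (mul_ne_zero (prod_ne_zero_iff.mpr fun k _ => ha k) (det_vandermonde_ne_zero_iff.mpr hinj))
    fun ε hε => ?_
  simpa only [re_sum] using sum_lt_sum_const_of_ne hdom hε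

theorem tendsto_cexp_mul_wronskian_snoc_div_wronskian_atBot (b₀ : β) (ha : ∀ k, a k b₀ ≠ 0)
    (hinj : Function.Injective fun k => w k b₀) (hdom : ∀ k b, b ≠ b₀ → (w k b₀).re < (w k b).re) :
    Tendsto (fun x : ℝ => cexp (-(μ * x)) *
        wronskian (n + 1) (Fin.snoc (fun k => expSum (a k) (w k)) fun y => cexp (μ * y)) x /
        wronskian n (fun k => expSum (a k) (w k)) x) atBot (𝓝 (∏ k, (μ - w k b₀))) := by
  simp_rw [cexp_mul_wronskian_snoc_div_wronskian]
  refine tendsto_sum_mul_cexp_div_sum_cexp_atBot _ _ _ (ε₀ := fun _ => b₀)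
    (mul_ne_zero (prod_ne_zero_iff.mpr fun k _ => ha k) (det_vandermonde_ne_zero_iff.mpr hinj))
    fun ε hε => ?_
  have hneg : ∀ k b, b ≠ b₀ → -(w k b).re < -(w k b₀).re := fun k b hb => neg_lt_neg (hdom k b hb)
  simpa only [re_sum, sum_neg_distrib, neg_lt_neg_iff] using sum_lt_sum_const_of_ne hneg hε

end Darboux

theorem stmt_16_general (N : ℕ) (k c : Fin N → ℝ)
    (hk0 : ∀ j, 0 < k j) (hkmono : StrictMono k)
    (hc : ∀ j : Fin N, 0 < (-1 : ℝ) ^ (j : ℕ) * c j)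
    (κ : ℝ)
    (ψ : Fin N → ℝ → ℂ)
    (hψ : ∀ j, ψ j = fun y =>
      Complex.exp ((k j * y : ℝ)) + ((c j : ℝ) : ℂ) * Complex.exp ((-(k j) * y : ℝ)))
    (F : ℝ → ℂ)
    (hF : F = fun x : ℝ =>
      Complex.exp (-(Complex.I * (κ : ℂ) * (x : ℂ)))
        * wronskian (N + 1)
            (Fin.snoc ψ (fun y : ℝ => Complex.exp (Complex.I * (κ : ℂ) * (y : ℂ)))) x
        / wronskian N ψ x) :
    Filter.Tendsto F Filter.atTop (nhds (∏ j : Fin N, (Complex.I * (κ : ℂ) - (k j : ℂ)))) ∧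
    Filter.Tendsto F Filter.atBot (nhds (∏ j : Fin N, (Complex.I * (κ : ℂ) + (k j : ℂ)))) := by
  set a : Fin N → Bool → ℂ := fun j b => cond b 1 (c j)
  set w : Fin N → Bool → ℂ := fun j b => cond b (k j) (-(k j))
  have hψ_eq : ψ = fun j => expSum (a j) (w j) := by
    ext j y
    simp [hψ, expSum, a, w]
  have hw (j : Fin N) : (w j false).re < (w j true).re := by simpa [w] using hk0 j
  subst hF hψ_eq
  constructor
  · refine tendsto_cexp_mul_wronskian_snoc_div_wronskian_atTop a w _ true (fun _ => one_ne_zero)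
      (ofReal_injective.comp hkmono.injective) fun j b hb => ?_
    rw [ne_eq, Bool.not_eq_true] at hb
    exact hb ▸ hw j
  · simpa [w] using tendsto_cexp_mul_wronskian_snoc_div_wronskian_atBot a w _ false
      (fun j => ofReal_ne_zero.mpr (right_ne_zero_of_mul (hc j).ne'))
      ((neg_injective.comp ofReal_injective).comp hkmono.injective)
      fun j b hb => by rw [ne_eq, Bool.not_eq_false] at hb; exact hb ▸ hw j

/-- Asymptotics of the Darboux-transformed plane wave for the reflectionless potential: with
seeds `ψⱼ(x) = e^{kⱼx} + c̃ⱼ e^{-kⱼx}` (`0 < k₁ < ⋯ < k_N`, `(-1)^{j-1} c̃ⱼ > 0`), the function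
`F(x) = e^{-ikx} W[ψ₁,…,ψ_N,e^{ik·}](x) / W[ψ₁,…,ψ_N](x)` tends to `∏ⱼ (ik - kⱼ)` as
`x → +∞` and to `∏ⱼ (ik + kⱼ)` as `x → -∞`. -/
theorem stmt_16 (N : ℕ) (hN : 1 ≤ N) (k c : Fin N → ℝ)
    (hk0 : ∀ j, 0 < k j) (hkmono : StrictMono k)
    (hc : ∀ j : Fin N, 0 < (-1 : ℝ) ^ (j : ℕ) * c j)
    (κ : ℝ) (hκ : 0 < κ)
    (ψ : Fin N → ℝ → ℂ)
    (hψ : ∀ j, ψ j = fun y =>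
      Complex.exp ((k j * y : ℝ)) + ((c j : ℝ) : ℂ) * Complex.exp ((-(k j) * y : ℝ)))
    (F : ℝ → ℂ)
    (hF : F = fun x : ℝ =>
      Complex.exp (-(Complex.I * (κ : ℂ) * (x : ℂ)))
        * wronskian (N + 1)
            (Fin.snoc ψ (fun y : ℝ => Complex.exp (Complex.I * (κ : ℂ) * (y : ℂ)))) x
        / wronskian N ψ x) :
    Filter.Tendsto F Filter.atTop (nhds (∏ j : Fin N, (Complex.I * (κ : ℂ) - (k j : ℂ)))) ∧
    Filter.Tendsto F Filter.atBot (nhds (∏ j : Fin N, (Complex.I * (κ : ℂ) + (k j : ℂ)))) :=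
  stmt_16_general N k c hk0 hkmono hc κ ψ hψ F hF
end

section
/- Define the physicists' Hermite polynomials by the recurrence H₀(x) = 1, H_{n+1}(x) = 2x·Hₙ(x) − Hₙ'(x), and define polynomials ξᵥ by ξ₀(x) = 1, ξ_{v+1}(x) = 2x·ξᵥ(x) + ξᵥ'(x) (so that ξᵥ(x) = i^{−v}Hᵥ(ix)). Let M ≥ 1, let d₁ < d₂ < ⋯ < d_M be distinct non-negative integers, let N ≥ d_M be an integer, and let e₁ < e₂ < ⋯ < e_{N+1−M} enumerate the set {0, 1, …, N} \ {N − d₁, N − d₂, …, N − d_M}. Then there exists a nonzero constant c ∈ ℝ such that for all x ∈ ℝ: W[ξ_{d₁}, ξ_{d₂}, …, ξ_{d_M}](x) = c · W[H_{e₁}, H_{e₂}, …, H_{e_{N+1−M}}](x). -/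
open Polynomial Finset


/-- The physicists' Hermite polynomials, via `H₀ = 1`, `H_{n+1}(x) = 2x Hₙ(x) - Hₙ'(x)`. -/
noncomputable def hermiteF : ℕ → ℝ → ℝ
  | 0 => fun _ => 1
  | n + 1 => fun x => 2 * x * hermiteF n x - deriv (hermiteF n) x

/-- The polynomials `ξᵥ(x) = i^{-v} Hᵥ(ix)`, via `ξ₀ = 1`, `ξ_{v+1}(x) = 2x ξᵥ(x) + ξᵥ'(x)`. -/
noncomputable def xiF : ℕ → ℝ → ℝ
  | 0 => fun _ => 1
  | v + 1 => fun x => 2 * x * xiF v x + deriv (xiF v) x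

noncomputable def ph : ℕ → ℝ[X]
  | 0 => 1
  | n + 1 => 2 * X * ph n - derivative (ph n)

noncomputable def pxi : ℕ → ℝ[X]
  | 0 => 1
  | n + 1 => 2 * X * pxi n + derivative (pxi n)

lemma ph_deriv (n : ℕ) : derivative (ph (n+1)) = C (2*(n+1) : ℝ) * ph n := by
  induction n with
  | zero =>
    show derivative (2 * X * (1:ℝ[X]) - derivative (1:ℝ[X])) = _
    simp [map_ofNat, ph]
  | succ n ih =>
    have hC : (C (2 * (((n+1 : ℕ):ℝ) + 1)) : ℝ[X]) = 2 + C (2*((n:ℝ)+1)) := by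
      push_cast
      rw [show (2*((n:ℝ)+1+1)) = 2 + 2*((n:ℝ)+1) by ring, map_add, map_ofNat]
    calc derivative (ph (n+2))
        = derivative (2 * X * ph (n+1)) - derivative (derivative (ph (n+1))) := by
          rw [show ph (n+2) = 2 * X * ph (n+1) - derivative (ph (n+1)) from rfl, derivative_sub]
      _ = 2 * ph (n+1) + 2 * X * derivative (ph (n+1)) - derivative (derivative (ph (n+1))) := by
          rw [derivative_mul]; ring_nf; simp [derivative_mul]; ring
      _ = 2 * ph (n+1) + 2 * X * (C (2*(n+1) : ℝ) * ph n) - C (2*(n+1) : ℝ) * derivative (ph n) := by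
          rw [ih, derivative_C_mul]
      _ = 2 * ph (n+1) + C (2*(n+1) : ℝ) * (2 * X * ph n - derivative (ph n)) := by ring
      _ = 2 * ph (n+1) + C (2*(n+1) : ℝ) * ph (n+1) := rfl
      _ = C (2 * (((n+1 : ℕ):ℝ) + 1)) * ph (n+1) := by rw [hC]; ring

lemma pxi_deriv (n : ℕ) : derivative (pxi (n+1)) = C (2*(n+1) : ℝ) * pxi n := by
  induction n with
  | zero =>
    show derivative (2 * X * (1:ℝ[X]) + derivative (1:ℝ[X])) = _
    simp [map_ofNat, pxi]
  | succ n ih =>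
    have hC : (C (2 * (((n+1 : ℕ):ℝ) + 1)) : ℝ[X]) = 2 + C (2*((n:ℝ)+1)) := by
      push_cast
      rw [show (2*((n:ℝ)+1+1)) = 2 + 2*((n:ℝ)+1) by ring, map_add, map_ofNat]
    calc derivative (pxi (n+2))
        = derivative (2 * X * pxi (n+1)) + derivative (derivative (pxi (n+1))) := by
          rw [show pxi (n+2) = 2 * X * pxi (n+1) + derivative (pxi (n+1)) from rfl, derivative_add]
      _ = 2 * pxi (n+1) + 2 * X * derivative (pxi (n+1)) + derivative (derivative (pxi (n+1))) := by
          rw [derivative_mul]; ring_nf; simp [derivative_mul]; ring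
      _ = 2 * pxi (n+1) + 2 * X * (C (2*(n+1) : ℝ) * pxi n) + C (2*(n+1) : ℝ) * derivative (pxi n) := by
          rw [ih, derivative_C_mul]
      _ = 2 * pxi (n+1) + C (2*(n+1) : ℝ) * (2 * X * pxi n + derivative (pxi n)) := by ring
      _ = 2 * pxi (n+1) + C (2*(n+1) : ℝ) * pxi (n+1) := rfl
      _ = C (2 * (((n+1 : ℕ):ℝ) + 1)) * pxi (n+1) := by rw [hC]; ring


lemma hermiteF_eq (n : ℕ) : hermiteF n = fun x => (ph n).eval x := by
  induction n with
  | zero => funext x; simp [hermiteF, ph]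
  | succ n ih =>
    funext x
    show 2 * x * hermiteF n x - deriv (hermiteF n) x = _
    rw [ih]
    simp [ph, Polynomial.deriv]

lemma xiF_eq (n : ℕ) : xiF n = fun x => (pxi n).eval x := by
  induction n with
  | zero => funext x; simp [xiF, pxi]
  | succ n ih =>
    funext x
    show 2 * x * xiF n x + deriv (xiF n) x = _
    rw [ih]
    simp [pxi, Polynomial.deriv]

lemma iteratedDeriv_polyeval (p : ℝ[X]) (j : ℕ) :
    iteratedDeriv j (fun x => p.eval x) = fun x => ((⇑derivative)^[j] p).eval x := by
  induction j with
  | zero => simp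
  | succ j ih =>
    rw [iteratedDeriv_succ, ih, Function.iterate_succ_apply']
    funext x
    exact Polynomial.deriv _

lemma ph_deriv' (n : ℕ) : derivative (ph n) = C (2*(n:ℝ)) * ph (n-1) := by
  cases n with
  | zero => simp [ph]
  | succ n => rw [ph_deriv]; norm_num

lemma pxi_deriv' (n : ℕ) : derivative (pxi n) = C (2*(n:ℝ)) * pxi (n-1) := by
  cases n with
  | zero => simp [pxi]
  | succ n => rw [pxi_deriv]; norm_num

lemma ph_succ (n : ℕ) : ph (n+1) = 2*X*ph n - C (2*(n:ℝ)) * ph (n-1) := by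
  rw [show ph (n+1) = 2*X*ph n - derivative (ph n) from rfl, ph_deriv']

lemma pxi_succ (n : ℕ) : pxi (n+1) = 2*X*pxi n + C (2*(n:ℝ)) * pxi (n-1) := by
  rw [show pxi (n+1) = 2*X*pxi n + derivative (pxi n) from rfl, pxi_deriv']


noncomputable def Vp (m : ℕ) : ℝ[X] :=
  ∑ i ∈ range (m+1), (-1:ℝ[X])^i * C (m.choose i : ℝ) * pxi i * ph (m - i)

lemma Vp_succ_zero (m : ℕ) : Vp (m+1) = 0 := by
  classical
  have split : Vp (m+1)
      = (∑ i ∈ range (m+2), (-1:ℝ[X])^i * C (m.choose i : ℝ) * pxi i * ph (m+1-i))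
      + (∑ i ∈ range (m+2), (-1:ℝ[X])^i * (C (((m+1).choose i : ℝ)) - C (m.choose i : ℝ)) * pxi i * ph (m+1-i)) := by
    rw [← Finset.sum_add_distrib]
    unfold Vp
    apply Finset.sum_congr rfl
    intro i _
    ring
  have hb1 : (∑ i ∈ range (m+2), (-1:ℝ[X])^i * C (m.choose i : ℝ) * pxi i * ph (m+1-i))
      = ∑ i ∈ range (m+1), (-1:ℝ[X])^i * C (m.choose i : ℝ) * pxi i * ph (m+1-i) := by
    rw [Finset.sum_range_succ, Nat.choose_succ_self]
    simp
  have hb2 : (∑ i ∈ range (m+1), (-1:ℝ[X])^i * C (m.choose i : ℝ) * pxi i * ph (m+1-i))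
      = 2*X*Vp m - ∑ i ∈ range (m+1),
          (-1:ℝ[X])^i * C (m.choose i : ℝ) * C (2*((m-i : ℕ):ℝ)) * pxi i * ph (m-i-1) := by
    unfold Vp
    rw [Finset.mul_sum, ← Finset.sum_sub_distrib]
    apply Finset.sum_congr rfl
    intro i hi
    have hi' : i ≤ m := by simpa using Nat.lt_succ_iff.mp (Finset.mem_range.mp hi)
    rw [show m+1-i = (m-i)+1 by omega, ph_succ]
    ring
  have hc1 : (∑ i ∈ range (m+2), (-1:ℝ[X])^i * (C (((m+1).choose i : ℝ)) - C (m.choose i : ℝ)) * pxi i * ph (m+1-i))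
      = ∑ i ∈ range (m+1), (-1:ℝ[X])^(i+1) * C (m.choose i : ℝ) * pxi (i+1) * ph (m-i) := by
    rw [Finset.sum_range_succ']
    simp only [Nat.choose_zero_right, Nat.cast_one, sub_self, mul_zero, zero_mul, add_zero]
    apply Finset.sum_congr rfl
    intro i _
    have hch : (((m+1).choose (i+1) : ℝ)) - (m.choose (i+1) : ℝ) = (m.choose i : ℝ) := by
      rw [Nat.choose_succ_succ]
      push_cast
      ring
    rw [show (m+1) - (i+1) = m - i by omega, ← map_sub, hch]
  have hc2 : (∑ i ∈ range (m+1), (-1:ℝ[X])^(i+1) * C (m.choose i : ℝ) * pxi (i+1) * ph (m-i))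
      = -(2*X*Vp m) - ∑ i ∈ range (m+1),
          (-1:ℝ[X])^i * C (m.choose i : ℝ) * C (2*(i:ℝ)) * pxi (i-1) * ph (m-i) := by
    have key : ∀ i ∈ range (m+1),
        (-1:ℝ[X])^(i+1) * C (m.choose i : ℝ) * pxi (i+1) * ph (m-i)
        = -(2*X*((-1:ℝ[X])^i * C (m.choose i : ℝ) * pxi i * ph (m - i)))
          - (-1:ℝ[X])^i * C (m.choose i : ℝ) * C (2*(i:ℝ)) * pxi (i-1) * ph (m-i) := by
      intro i _
      rw [pxi_succ]
      ring
    rw [Finset.sum_congr rfl key, Finset.sum_sub_distrib]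
    unfold Vp
    rw [Finset.mul_sum]
    rw [Finset.sum_neg_distrib]
  have hterm : ∀ k ∈ range m,
      ((-1:ℝ[X])^k * C (m.choose k : ℝ) * C (2*((m-k : ℕ):ℝ)) * pxi k * ph (m-k-1))
      + ((-1:ℝ[X])^(k+1) * C (m.choose (k+1) : ℝ) * C (2*(((k+1):ℕ):ℝ)) * pxi ((k+1)-1) * ph (m-(k+1))) = 0 := by
    intro k _
    have h := Nat.choose_succ_right_eq m k
    have h' : ((m.choose (k+1) * (k+1) : ℕ) : ℝ) = ((m.choose k * (m-k) : ℕ) : ℝ) := by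
      exact_mod_cast congrArg (Nat.cast : ℕ → ℝ) h
    push_cast at h'
    have hC : C (m.choose k : ℝ) * C (2*((m-k : ℕ):ℝ)) = C (m.choose (k+1) : ℝ) * C (2*(((k+1):ℕ):ℝ)) := by
      rw [← map_mul, ← map_mul]
      congr 1
      push_cast
      linarith [h']
    rw [show (k+1) - 1 = k from rfl, show m - (k+1) = m - k - 1 by omega]
    linear_combination ((-1:ℝ[X])^k * pxi k * ph (m-k-1)) * hC
  have hD : (∑ i ∈ range (m+1), (-1:ℝ[X])^i * C (m.choose i : ℝ) * C (2*((m-i : ℕ):ℝ)) * pxi i * ph (m-i-1))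
      = ∑ i ∈ range m, (-1:ℝ[X])^i * C (m.choose i : ℝ) * C (2*((m-i : ℕ):ℝ)) * pxi i * ph (m-i-1) := by
    rw [Finset.sum_range_succ]
    simp only [Nat.sub_self, Nat.cast_zero, mul_zero, map_zero, zero_mul, add_zero]
  have hE : (∑ i ∈ range (m+1), (-1:ℝ[X])^i * C (m.choose i : ℝ) * C (2*(i:ℝ)) * pxi (i-1) * ph (m-i))
      = ∑ k ∈ range m, (-1:ℝ[X])^(k+1) * C (m.choose (k+1) : ℝ) * C (2*(((k+1):ℕ):ℝ)) * pxi ((k+1)-1) * ph (m-(k+1)) := by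
    rw [Finset.sum_range_succ']
    simp only [Nat.cast_zero, mul_zero, map_zero, zero_mul, add_zero]
  have hDE : (∑ i ∈ range (m+1), (-1:ℝ[X])^i * C (m.choose i : ℝ) * C (2*((m-i : ℕ):ℝ)) * pxi i * ph (m-i-1))
      + (∑ i ∈ range (m+1), (-1:ℝ[X])^i * C (m.choose i : ℝ) * C (2*(i:ℝ)) * pxi (i-1) * ph (m-i)) = 0 := by
    rw [hD, hE, ← Finset.sum_add_distrib]
    exact Finset.sum_eq_zero hterm
  rw [split, hb1, hb2, hc1, hc2]
  linear_combination -hDE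

lemma Vp_zero {m : ℕ} (hm : 1 ≤ m) : Vp m = 0 := by
  obtain ⟨k, rfl⟩ : ∃ k, m = k + 1 := ⟨m - 1, by omega⟩
  exact Vp_succ_zero k

noncomputable def fc (n : ℕ) : ℝ := 2^n * n.factorial

lemma fc_pos (n : ℕ) : 0 < fc n := by
  unfold fc
  positivity

lemma fc_ne (n : ℕ) : fc n ≠ 0 := ne_of_gt (fc_pos n)

noncomputable def qp (n : ℕ) : ℝ[X] := C (fc n)⁻¹ * ph n
noncomputable def rp (n : ℕ) : ℝ[X] := C (fc n)⁻¹ * pxi n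

lemma qp_zero : qp 0 = 1 := by simp [qp, fc, ph]
lemma rp_zero : rp 0 = 1 := by simp [rp, fc, pxi]

lemma fc_succ (n : ℕ) : (fc (n+1))⁻¹ * (2*((n:ℝ)+1)) = (fc n)⁻¹ := by
  have h1 : fc (n+1) = fc n * (2*((n:ℝ)+1)) := by
    unfold fc
    rw [Nat.factorial_succ]
    push_cast
    ring
  have h2 : (2*((n:ℝ)+1)) ≠ 0 := by positivity
  rw [h1, mul_inv, mul_assoc, inv_mul_cancel₀ h2, mul_one]

lemma qp_deriv (n : ℕ) : derivative (qp (n+1)) = qp n := by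
  unfold qp
  rw [derivative_C_mul, ph_deriv, ← mul_assoc, ← map_mul, fc_succ]

lemma rp_deriv (n : ℕ) : derivative (rp (n+1)) = rp n := by
  unfold rp
  rw [derivative_C_mul, pxi_deriv, ← mul_assoc, ← map_mul, fc_succ]

lemma qp_iter (j n : ℕ) : (⇑derivative)^[j] (qp n) = if j ≤ n then qp (n - j) else 0 := by
  induction j generalizing n with
  | zero => simp
  | succ j ih =>
    rw [Function.iterate_succ_apply]
    cases n with
    | zero =>
      have : derivative (qp 0) = 0 := by rw [qp_zero]; simp
      rw [this]
      simp [Function.iterate_fixed, map_zero]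
    | succ n =>
      rw [qp_deriv, ih]
      by_cases h : j ≤ n
      · rw [if_pos h, if_pos (by omega)]
        congr 1
        omega
      · rw [if_neg h, if_neg (by omega)]

lemma rp_iter (j n : ℕ) : (⇑derivative)^[j] (rp n) = if j ≤ n then rp (n - j) else 0 := by
  induction j generalizing n with
  | zero => simp
  | succ j ih =>
    rw [Function.iterate_succ_apply]
    cases n with
    | zero =>
      have : derivative (rp 0) = 0 := by rw [rp_zero]; simp
      rw [this]
      simp [Function.iterate_fixed, map_zero]
    | succ n =>
      rw [rp_deriv, ih]
      by_cases h : j ≤ n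
      · rw [if_pos h, if_pos (by omega)]
        congr 1
        omega
      · rw [if_neg h, if_neg (by omega)]

lemma conv {m : ℕ} (hm : 1 ≤ m) :
    ∑ l ∈ range (m+1), qp (m - l) * ((-1:ℝ[X])^l * rp l) = 0 := by
  have key : ∀ l ∈ range (m+1),
      qp (m - l) * ((-1:ℝ[X])^l * rp l)
      = C (fc m)⁻¹ * ((-1:ℝ[X])^l * C (m.choose l : ℝ) * pxi l * ph (m - l)) := by
    intro l hl
    have hl' : l ≤ m := by
      have := Finset.mem_range.mp hl
      omega
    have hfac : ((m.choose l * l.factorial * (m-l).factorial : ℕ) : ℝ) = (m.factorial : ℝ) := by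
      exact_mod_cast congrArg (Nat.cast : ℕ → ℝ) (Nat.choose_mul_factorial_mul_factorial hl')
    have hpow : (2:ℝ)^l * (2:ℝ)^(m-l) = (2:ℝ)^m := by
      rw [← pow_add]
      congr 1
      omega
    have hCs : (C (fc (m-l))⁻¹ : ℝ[X]) * C (fc l)⁻¹ = C (fc m)⁻¹ * C (m.choose l : ℝ) := by
      rw [← map_mul, ← map_mul]
      congr 1
      have hchoose : (0:ℝ) < (m.choose l : ℝ) := by
        exact_mod_cast Nat.choose_pos hl'
      have hkey : fc l * fc (m-l) * (m.choose l:ℝ) = fc m := by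
        unfold fc
        calc (2:ℝ)^l * l.factorial * ((2:ℝ)^(m-l) * (m-l).factorial) * (m.choose l:ℝ)
            = ((2:ℝ)^l * (2:ℝ)^(m-l)) * ((m.choose l:ℝ) * l.factorial * (m-l).factorial) := by ring
          _ = (2:ℝ)^m * m.factorial := by rw [hpow]; push_cast [hfac]; rw [← hfac]; push_cast; ring
      rw [← hkey, mul_inv, mul_inv, mul_assoc, inv_mul_cancel₀ (ne_of_gt hchoose), mul_one, mul_comm]
    unfold qp rp
    calc C (fc (m-l))⁻¹ * ph (m-l) * ((-1:ℝ[X])^l * (C (fc l)⁻¹ * pxi l))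
        = (C (fc (m-l))⁻¹ * C (fc l)⁻¹) * ((-1:ℝ[X])^l * pxi l * ph (m-l)) := by ring
      _ = (C (fc m)⁻¹ * C (m.choose l : ℝ)) * ((-1:ℝ[X])^l * pxi l * ph (m-l)) := by rw [hCs]
      _ = C (fc m)⁻¹ * ((-1:ℝ[X])^l * C (m.choose l : ℝ) * pxi l * ph (m - l)) := by ring
  rw [Finset.sum_congr rfl key, ← Finset.mul_sum]
  rw [show (∑ l ∈ range (m+1), (-1:ℝ[X])^l * C (m.choose l : ℝ) * pxi l * ph (m - l)) = Vp m from rfl]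
  rw [Vp_zero hm, mul_zero]


lemma ph_fact (n : ℕ) : ph n = C (fc n) * qp n := by
  unfold qp
  rw [← mul_assoc, ← map_mul, mul_inv_cancel₀ (fc_ne n), map_one, one_mul]

lemma pxi_fact (n : ℕ) : pxi n = C (fc n) * rp n := by
  unfold rp
  rw [← mul_assoc, ← map_mul, mul_inv_cancel₀ (fc_ne n), map_one, one_mul]

lemma jacobi_aux {α β : Type} [Fintype α] [Fintype β] [DecidableEq α] [DecidableEq β]
    (P Q : Matrix (α ⊕ β) (α ⊕ β) ℝ[X]) (h : P * Q = 1) :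
    P.det * (Q.toBlocks₂₂).det = (P.toBlocks₁₁).det := by
  have hPQ : Matrix.fromBlocks
      (P.toBlocks₁₁ * Q.toBlocks₁₁ + P.toBlocks₁₂ * Q.toBlocks₂₁)
      (P.toBlocks₁₁ * Q.toBlocks₁₂ + P.toBlocks₁₂ * Q.toBlocks₂₂)
      (P.toBlocks₂₁ * Q.toBlocks₁₁ + P.toBlocks₂₂ * Q.toBlocks₂₁)
      (P.toBlocks₂₁ * Q.toBlocks₁₂ + P.toBlocks₂₂ * Q.toBlocks₂₂)
      = Matrix.fromBlocks 1 0 0 1 := by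
    rw [← Matrix.fromBlocks_multiply, Matrix.fromBlocks_toBlocks, Matrix.fromBlocks_toBlocks, h,
      Matrix.fromBlocks_one]
  have h12 : P.toBlocks₁₁ * Q.toBlocks₁₂ + P.toBlocks₁₂ * Q.toBlocks₂₂ = 0 := by
    have h' := congrArg Matrix.toBlocks₁₂ hPQ
    rw [Matrix.toBlocks_fromBlocks₁₂, Matrix.toBlocks_fromBlocks₁₂] at h'
    exact h'
  have h22 : P.toBlocks₂₁ * Q.toBlocks₁₂ + P.toBlocks₂₂ * Q.toBlocks₂₂ = 1 := by
    have h' := congrArg Matrix.toBlocks₂₂ hPQ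
    rw [Matrix.toBlocks_fromBlocks₂₂, Matrix.toBlocks_fromBlocks₂₂] at h'
    exact h'
  have key : P * Matrix.fromBlocks 1 Q.toBlocks₁₂ 0 Q.toBlocks₂₂
      = Matrix.fromBlocks P.toBlocks₁₁ 0 P.toBlocks₂₁ 1 := by
    conv_lhs => rw [← Matrix.fromBlocks_toBlocks P]
    rw [Matrix.fromBlocks_multiply]
    rw [Matrix.mul_one, Matrix.mul_one, Matrix.mul_zero, Matrix.mul_zero,
      add_zero, add_zero, h12, h22]
  have hdet := congrArg Matrix.det key
  rw [Matrix.det_mul, Matrix.det_fromBlocks_zero₂₁, Matrix.det_fromBlocks_zero₁₂,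
    Matrix.det_one, Matrix.det_one, one_mul, mul_one] at hdet
  exact hdet

noncomputable def Amat (n : ℕ) : Matrix (Fin n) (Fin n) ℝ[X] :=
  Matrix.of fun i j => if (j:ℕ) ≤ (i:ℕ) then qp ((i:ℕ) - (j:ℕ)) else 0

noncomputable def Bmat (n : ℕ) : Matrix (Fin n) (Fin n) ℝ[X] :=
  Matrix.of fun i j =>
    if (j:ℕ) ≤ (i:ℕ) then (-1:ℝ[X])^((i:ℕ)-(j:ℕ)) * rp ((i:ℕ)-(j:ℕ)) else 0

lemma Amat_det (n : ℕ) : (Amat n).det = 1 := by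
  have h : (Amat n).det = ∏ i : Fin n, Amat n i i := by
    apply Matrix.det_of_lowerTriangular
    intro i j hij
    simp only [Amat, Matrix.of_apply]
    rw [if_neg (by exact Nat.not_le.mpr (by exact_mod_cast hij))]
  rw [h]
  apply Finset.prod_eq_one
  intro i _
  simp [Amat, qp_zero]

lemma AB (n : ℕ) : Amat n * Bmat n = 1 := by
  refine Matrix.ext (fun i j => ?_)
  rw [Matrix.mul_apply]
  set F : ℕ → ℝ[X] := fun k => (if k ≤ (i:ℕ) then qp ((i:ℕ)-k) else 0)
          * (if (j:ℕ) ≤ k then (-1:ℝ[X])^(k-(j:ℕ)) * rp (k-(j:ℕ)) else 0) with hF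
  have hterm : ∀ k : Fin n, Amat n i k * Bmat n k j = F (k:ℕ) := by
    intro k
    simp [Amat, Bmat, hF]
  rw [Finset.sum_congr rfl (fun k _ => hterm k)]
  rw [Fin.sum_univ_eq_sum_range F n]
  simp only [hF]
  by_cases hij : (j:ℕ) ≤ (i:ℕ)
  · have hsub : Finset.Icc (j:ℕ) (i:ℕ) ⊆ Finset.range n := by
      intro k hk
      rw [Finset.mem_Icc] at hk
      rw [Finset.mem_range]
      omega
    rw [← Finset.sum_subset hsub]
    · rw [show Finset.Icc (j:ℕ) (i:ℕ) = Finset.Ico (j:ℕ) ((i:ℕ)+1) by rw [Finset.Ico_add_one_right_eq_Icc]]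
      rw [Finset.sum_Ico_eq_sum_range]
      have hred : ∀ l ∈ range ((i:ℕ)+1-(j:ℕ)),
          ((if (j:ℕ)+l ≤ (i:ℕ) then qp ((i:ℕ)-((j:ℕ)+l)) else 0)
            * (if (j:ℕ) ≤ (j:ℕ)+l then (-1:ℝ[X])^(((j:ℕ)+l)-(j:ℕ)) * rp (((j:ℕ)+l)-(j:ℕ)) else 0))
          = qp (((i:ℕ)-(j:ℕ)) - l) * ((-1:ℝ[X])^l * rp l) := by
        intro l hl
        have hl' : l ≤ (i:ℕ)-(j:ℕ) := by
          have := Finset.mem_range.mp hl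
          omega
        rw [if_pos (by omega), if_pos (by omega)]
        rw [show ((j:ℕ)+l)-(j:ℕ) = l by omega, show (i:ℕ)-((j:ℕ)+l) = ((i:ℕ)-(j:ℕ))-l by omega]
      rw [Finset.sum_congr rfl hred]
      by_cases heq : (i:ℕ) = (j:ℕ)
      · have hi : i = j := Fin.ext heq
        rw [show (i:ℕ)+1-(j:ℕ) = 1 by omega]
        rw [Finset.sum_range_one]
        rw [show (i:ℕ)-(j:ℕ) - 0 = 0 by omega, qp_zero, rp_zero]
        rw [hi, Matrix.one_apply_eq]
        ring
      · have hm : 1 ≤ (i:ℕ)-(j:ℕ) := by omega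
        rw [show (i:ℕ)+1-(j:ℕ) = ((i:ℕ)-(j:ℕ))+1 by omega]
        rw [conv hm]
        rw [Matrix.one_apply_ne (by exact fun hc => heq (by rw [hc]))]
    · intro k hk hk2
      rw [Finset.mem_range] at hk
      rw [Finset.mem_Icc] at hk2
      rcases Nat.lt_or_ge k (j:ℕ) with h | h
      · rw [if_neg (show ¬((j:ℕ) ≤ k) by omega), mul_zero]
      · rw [if_neg (show ¬(k ≤ (i:ℕ)) by omega), zero_mul]
  · rw [Matrix.one_apply_ne (by exact fun hc => hij (by rw [hc]))]
    apply Finset.sum_eq_zero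
    intro k hk
    rcases Nat.lt_or_ge k (j:ℕ) with h | h
    · rw [if_neg (show ¬((j:ℕ) ≤ k) by omega), mul_zero]
    · rw [if_neg (show ¬(k ≤ (i:ℕ)) by omega), zero_mul]


/-- Duality between pseudo virtual states and eigenstates for the harmonic oscillator:
the Wronskian of the polynomials `ξ_{d₁},…,ξ_{d_M}` is proportional (by a nonzero constant) to
the Wronskian of the Hermite polynomials `H_{e₁},…,H_{e_{N+1-M}}`, where `e₁ < ⋯ < e_{N+1-M}`
enumerate `{0,1,…,N} \ {N-d₁,…,N-d_M}`. -/
theorem stmt_17 (M N : ℕ) (hM : 1 ≤ M) (d : Fin M → ℕ) (hd : StrictMono d)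
    (hdN : ∀ j, d j ≤ N)
    (e : Fin (N + 1 - M) → ℕ) (he : StrictMono e)
    (hrange : ∀ m : ℕ, (∃ i, e i = m) ↔ (m ≤ N ∧ ∀ j, m ≠ N - d j)) :
    ∃ c : ℝ, c ≠ 0 ∧ ∀ x : ℝ,
      wronskianR M (fun j => xiF (d j)) x
        = c * wronskianR (N + 1 - M) (fun i => hermiteF (e i)) x := by
  classical
  have hMn : M ≤ N + 1 := by
    have hinj : Function.Injective (fun j : Fin M => (⟨d j, by have := hdN j; omega⟩ : Fin (N+1))) := by
      intro a b hab
      exact hd.injective (by simpa using congrArg Fin.val hab)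
    simpa using Fintype.card_le_of_injective _ hinj
  have hmM : (N + 1 - M) + M = N + 1 := by omega
  have heN : ∀ i, e i ≤ N := fun i => ((hrange (e i)).mp ⟨i, rfl⟩).1
  have hene : ∀ i k, e i ≠ N - d k := fun i k => ((hrange (e i)).mp ⟨i, rfl⟩).2 k
  let ρf : Fin (N+1-M) ⊕ Fin M → Fin (N+1) := Sum.elim (fun i => ⟨e i, by have := heN i; omega⟩)
      (fun k => ⟨N - d k, by omega⟩)
  have hρinj : Function.Injective ρf := by
    intro a b hab
    rcases a with a | a <;> rcases b with b | b
    · have h1 : e a = e b := by simpa [ρf] using congrArg Fin.val hab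
      exact congrArg Sum.inl (he.injective h1)
    · exact absurd (by simpa [ρf] using congrArg Fin.val hab) (hene a b)
    · exact absurd (by simpa [ρf] using (congrArg Fin.val hab).symm) (hene b a)
    · have h1 : N - d a = N - d b := by simpa [ρf] using congrArg Fin.val hab
      have h2 : d a = d b := by have := hdN a; have := hdN b; omega
      exact congrArg Sum.inr (hd.injective h2)
  have hρbij : Function.Bijective ρf :=
    (Fintype.bijective_iff_injective_and_card ρf).mpr ⟨hρinj, by simp [hmM]⟩
  let ρ : (Fin (N+1-M) ⊕ Fin M) ≃ Fin (N+1) := Equiv.ofBijective ρf hρbij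
  let κ : (Fin (N+1-M) ⊕ Fin M) ≃ Fin (N+1) := finSumFinEquiv.trans (finCongr hmM)
  set P := (Amat (N+1)).submatrix ρ κ with hPdef
  set Q := (Bmat (N+1)).submatrix κ ρ with hQdef
  have hPQ : P * Q = 1 := by
    rw [hPdef, hQdef, Matrix.submatrix_mul_equiv, AB, Matrix.submatrix_one_equiv]
  have hjac := jacobi_aux P Q hPQ
  let σp : Equiv.Perm (Fin (N+1-M) ⊕ Fin M) := ρ.trans κ.symm
  have hdetP : P.det = ((Equiv.Perm.sign σp : ℤ) : ℝ[X]) := by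
    have h1 : P = ((Amat (N+1)).submatrix κ κ).submatrix σp id := by
      refine Matrix.ext fun a b => ?_
      simp [hPdef, Matrix.submatrix_apply, σp]
    rw [h1, Matrix.det_permute, Matrix.det_submatrix_equiv_self, Amat_det, mul_one]
  have hκ1 : ∀ b : Fin (N+1-M), ((κ (Sum.inl b)) : ℕ) = (b : ℕ) := by
    intro b; simp [κ]
  have hκ2 : ∀ b : Fin M, ((κ (Sum.inr b)) : ℕ) = (N+1-M) + (b:ℕ) := by
    intro b; simp [κ]
  have hρ1 : ∀ a : Fin (N+1-M), ((ρ (Sum.inl a)) : ℕ) = e a := fun a => rfl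
  have hρ2 : ∀ k : Fin M, ((ρ (Sum.inr k)) : ℕ) = N - d k := fun k => rfl
  have hP11 : ∀ (a : Fin (N+1-M)) (b : Fin (N+1-M)), P.toBlocks₁₁ a b
      = (if (b:ℕ) ≤ e a then qp (e a - (b:ℕ)) else 0) := by
    intro a b
    show P (Sum.inl a) (Sum.inl b) = _
    rw [hPdef, Matrix.submatrix_apply]
    show Amat (N+1) (ρ (Sum.inl a)) (κ (Sum.inl b)) = _
    simp only [Amat, Matrix.of_apply, hρ1, hκ1]
  have hQ22 : ∀ (b k : Fin M), Q.toBlocks₂₂ b k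
      = (if (N - d k) ≤ (N+1-M) + (b:ℕ) then
          (-1:ℝ[X])^(((N+1-M) + (b:ℕ)) - (N - d k)) * rp (((N+1-M) + (b:ℕ)) - (N - d k)) else 0) := by
    intro b k
    show Q (Sum.inr b) (Sum.inr k) = _
    rw [hQdef, Matrix.submatrix_apply]
    show Bmat (N+1) (κ (Sum.inr b)) (ρ (Sum.inr k)) = _
    simp only [Bmat, Matrix.of_apply, hρ2, hκ2]
  -- the polynomial Wronskian matrices
  set Wxi : Matrix (Fin M) (Fin M) ℝ[X] :=
    Matrix.of (fun j k => (⇑derivative)^[(j:ℕ)] (pxi (d k))) with hWxidef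
  set WH : Matrix (Fin (N+1-M)) (Fin (N+1-M)) ℝ[X] :=
    Matrix.of (fun j i => (⇑derivative)^[(j:ℕ)] (ph (e i))) with hWHdef
  have hWH : WH.det = (∏ i : Fin (N+1-M), C (fc (e i))) * (P.toBlocks₁₁).det := by
    have hfact : WH = Matrix.of (fun j i => (fun i' : Fin (N+1-M) => C (fc (e i'))) i
        * (P.toBlocks₁₁).transpose j i) := by
      refine Matrix.ext fun j i => ?_
      show (⇑derivative)^[(j:ℕ)] (ph (e i)) = C (fc (e i)) * (P.toBlocks₁₁) i j
      rw [ph_fact (e i), iterate_derivative_C_mul, qp_iter, hP11 i j]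
    calc WH.det
        = (Matrix.of (fun j i => (fun i' : Fin (N+1-M) => C (fc (e i'))) i
            * (P.toBlocks₁₁).transpose j i)).det := by rw [hfact]
      _ = (∏ i : Fin (N+1-M), C (fc (e i))) * ((P.toBlocks₁₁).transpose).det :=
          Matrix.det_mul_row _ _
      _ = (∏ i : Fin (N+1-M), C (fc (e i))) * (P.toBlocks₁₁).det := by
          rw [Matrix.det_transpose]
  set G : Matrix (Fin M) (Fin M) ℝ[X] :=
    Matrix.of (fun j k => (-1:ℝ[X])^((j:ℕ)) * Q.toBlocks₂₂ (Fin.rev j) k) with hGdef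
  have hentry : ∀ (j k : Fin M), Wxi j k
      = (C (fc (d k)) * (-1:ℝ[X])^((d k : ℕ))) * G j k := by
    intro j k
    show (⇑derivative)^[(j:ℕ)] (pxi (d k)) = _
    have hjN : (j:ℕ) ≤ N := by have := j.isLt; omega
    have hrev : ((N+1-M) + ((Fin.rev j) : ℕ)) = N - (j:ℕ) := by
      rw [Fin.val_rev]
      have := j.isLt
      omega
    rw [pxi_fact (d k), iterate_derivative_C_mul, rp_iter]
    show C (fc (d k)) * _ = (C (fc (d k)) * (-1:ℝ[X])^((d k : ℕ)))
        * ((-1:ℝ[X])^((j:ℕ)) * Q.toBlocks₂₂ (Fin.rev j) k)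
    rw [hQ22 (Fin.rev j) k, hrev]
    by_cases hcase : (j:ℕ) ≤ d k
    · rw [if_pos hcase, if_pos (show N - d k ≤ N - (j:ℕ) by have := hdN k; omega)]
      rw [show (N - (j:ℕ)) - (N - d k) = d k - (j:ℕ) by have := hdN k; omega]
      have hsgn : (-1:ℝ[X])^((d k:ℕ)) * ((-1:ℝ[X])^((j:ℕ)) * (-1:ℝ[X])^(d k - (j:ℕ))) = 1 := by
        rw [← pow_add, ← pow_add, show (d k:ℕ) + ((j:ℕ) + (d k - (j:ℕ))) = 2 * d k by omega,
          pow_mul]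
        norm_num
      linear_combination (-(C (fc (d k)) * rp (d k - (j:ℕ)))) * hsgn
    · rw [if_neg hcase, if_neg (show ¬ (N - d k ≤ N - (j:ℕ)) by have := hdN k; omega)]
      ring
  have hWxi : Wxi.det =
      (∏ k : Fin M, (C (fc (d k)) * (-1:ℝ[X])^((d k : ℕ))))
      * ((∏ j : Fin M, (-1:ℝ[X])^((j:ℕ)))
        * (((Equiv.Perm.sign (Fin.revPerm : Equiv.Perm (Fin M)) : ℤ) : ℝ[X])
            * (Q.toBlocks₂₂).det)) := by
    have h1 : Wxi = Matrix.of (fun j k => (fun k' : Fin M =>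
        C (fc (d k')) * (-1:ℝ[X])^((d k' : ℕ))) k * G j k) := Matrix.ext hentry
    have h2 : G = Matrix.of (fun j k => (fun j' : Fin M => (-1:ℝ[X])^((j':ℕ))) j
        * ((Q.toBlocks₂₂).submatrix (⇑(Fin.revPerm : Equiv.Perm (Fin M))) id) j k) := by
      refine Matrix.ext fun j k => ?_
      simp [hGdef, Matrix.submatrix_apply]
    calc Wxi.det
        = (Matrix.of (fun j k => (fun k' : Fin M =>
            C (fc (d k')) * (-1:ℝ[X])^((d k' : ℕ))) k * G j k)).det := by rw [h1]
      _ = (∏ k : Fin M, (C (fc (d k)) * (-1:ℝ[X])^((d k : ℕ)))) * G.det :=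
          Matrix.det_mul_row _ _
      _ = (∏ k : Fin M, (C (fc (d k)) * (-1:ℝ[X])^((d k : ℕ))))
          * ((∏ j : Fin M, (-1:ℝ[X])^((j:ℕ)))
            * (((Q.toBlocks₂₂).submatrix (⇑(Fin.revPerm : Equiv.Perm (Fin M))) id)).det) := by
          rw [h2, Matrix.det_mul_column]
      _ = _ := by rw [Matrix.det_permute]
  -- convert the sign and C-products to real constants
  have hCpow : ∀ t : ℕ, ((-1:ℝ[X])^t) = C ((-1:ℝ)^t) := by
    intro t
    rw [map_pow, map_neg, map_one]
  have hC1 : (∏ k : Fin M, (C (fc (d k)) * (-1:ℝ[X])^((d k : ℕ))))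
      = C (∏ k : Fin M, (fc (d k) * (-1:ℝ)^((d k : ℕ)))) := by
    rw [map_prod]
    exact Finset.prod_congr rfl (fun k _ => by rw [map_mul, hCpow])
  have hC2 : (∏ j : Fin M, (-1:ℝ[X])^((j:ℕ))) = C (∏ j : Fin M, (-1:ℝ)^((j:ℕ))) := by
    rw [map_prod]
    exact Finset.prod_congr rfl (fun k _ => by rw [hCpow])
  have hC3 : (((Equiv.Perm.sign (Fin.revPerm : Equiv.Perm (Fin M)) : ℤ) : ℝ[X]))
      = C (((Equiv.Perm.sign (Fin.revPerm : Equiv.Perm (Fin M)) : ℤ) : ℝ)) := by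
    rw [Polynomial.C_eq_intCast]
  have hCe : (∏ i : Fin (N+1-M), C (fc (e i))) = C (∏ i : Fin (N+1-M), fc (e i)) := by
    rw [map_prod]
  -- resolve Q22 determinant via Jacobi
  have hQ22det : (Q.toBlocks₂₂).det
      = C (((Equiv.Perm.sign σp : ℤ) : ℝ)) * (P.toBlocks₁₁).det := by
    rcases Int.units_eq_one_or (Equiv.Perm.sign σp) with h | h <;>
      rw [h] at hdetP ⊢ <;> rw [hdetP] at hjac <;>
      [skip; skip]
    · simp only [Units.val_one, Int.cast_one, map_one, one_mul] at hjac ⊢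
      rw [hjac]
    · simp only [Units.val_neg, Units.val_one, Int.cast_neg, Int.cast_one, map_neg, map_one,
        neg_mul, one_mul, neg_one_mul] at hjac ⊢
      rw [← hjac]
      ring
  -- real constants
  set k1 : ℝ := (∏ k : Fin M, (fc (d k) * (-1:ℝ)^((d k : ℕ))))
      * ((∏ j : Fin M, (-1:ℝ)^((j:ℕ)))
        * (((Equiv.Perm.sign (Fin.revPerm : Equiv.Perm (Fin M)) : ℤ) : ℝ)
          * ((Equiv.Perm.sign σp : ℤ) : ℝ))) with hk1def
  set k2 : ℝ := ∏ i : Fin (N+1-M), fc (e i) with hk2def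
  have hk1 : k1 ≠ 0 := by
    rw [hk1def]
    apply mul_ne_zero
    · apply Finset.prod_ne_zero_iff.mpr
      intro k _
      exact mul_ne_zero (fc_ne _) (pow_ne_zero _ (by norm_num))
    apply mul_ne_zero
    · apply Finset.prod_ne_zero_iff.mpr
      intro k _
      exact pow_ne_zero _ (by norm_num)
    apply mul_ne_zero
    · rcases Int.units_eq_one_or (Equiv.Perm.sign (Fin.revPerm : Equiv.Perm (Fin M))) with h | h <;>
        rw [h] <;> norm_num
    · rcases Int.units_eq_one_or (Equiv.Perm.sign σp) with h | h <;> rw [h] <;> norm_num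
  have hk2 : k2 ≠ 0 := by
    rw [hk2def]
    apply Finset.prod_ne_zero_iff.mpr
    intro i _
    exact fc_ne _
  have hWxiF : Wxi.det = C k1 * (P.toBlocks₁₁).det := by
    rw [hWxi, hQ22det, hC1, hC2, hC3, hk1def, map_mul, map_mul, map_mul]
    ring
  have hWHF : WH.det = C k2 * (P.toBlocks₁₁).det := by
    rw [hWH, hCe, hk2def]
  refine ⟨k1 / k2, div_ne_zero hk1 hk2, fun x => ?_⟩
  have hmapx : (Matrix.of fun j k : Fin M => iteratedDeriv (j : ℕ) (xiF (d k)) x)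
      = ((Polynomial.evalRingHom x).mapMatrix Wxi) := by
    refine Matrix.ext fun j k => ?_
    show iteratedDeriv (j : ℕ) (xiF (d k)) x = Polynomial.eval x (Wxi j k)
    rw [xiF_eq, iteratedDeriv_polyeval]
    rfl
  have hmapH : (Matrix.of fun j i : Fin (N+1-M) => iteratedDeriv (j : ℕ) (hermiteF (e i)) x)
      = ((Polynomial.evalRingHom x).mapMatrix WH) := by
    refine Matrix.ext fun j i => ?_
    show iteratedDeriv (j : ℕ) (hermiteF (e i)) x = Polynomial.eval x (WH j i)
    rw [hermiteF_eq, iteratedDeriv_polyeval]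
    rfl
  have hW1 : wronskianR M (fun k => xiF (d k)) x = Polynomial.eval x (Wxi.det) := by
    unfold wronskianR
    rw [hmapx, ← RingHom.map_det]
    rfl
  have hW2 : wronskianR (N + 1 - M) (fun i => hermiteF (e i)) x
      = Polynomial.eval x (WH.det) := by
    unfold wronskianR
    rw [hmapH, ← RingHom.map_det]
    rfl
  rw [hW1, hW2, hWxiF, hWHF]
  rw [Polynomial.eval_mul, Polynomial.eval_mul, Polynomial.eval_C, Polynomial.eval_C]
  rw [← mul_assoc, div_mul_cancel₀ k1 hk2]
end

section
/- Let g ∈ ℝ, let v be a non-negative integer, and let P : ℝ → ℝ be a polynomial function satisfying the Laguerre differential equation t·P''(t) + (g + 1/2 − t)·P'(t) + v·P(t) = 0 for all t ∈ ℝ. Define φ̃(x) := e^{x²/2} · x^g · P(−x²) for x ∈ (0, ∞). Then for all x ∈ (0, ∞): −φ̃''(x) + ( x² + g(g−1)/x² − 1 − 2g )·φ̃(x) = −4(g + v + 1/2)·φ̃(x). -/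
/-!
Writing `φ̃ = w u` with `w(y) = e^{y²/2} y^g` and `u(y) = P(-y²)`, the factor `w` has logarithmic
derivative `a(y) = y + g/y`, so `w'' = (a' + a²) w` and `V - (a' + a²) = -2 - 4g` for the potential
`V(x) = x² + g(g-1)/x² - 1 - 2g`. Hence `-φ̃'' + V φ̃ + 4(g + v + 1/2) φ̃ = w (4v u - 2a u' - u'')`,
and in the variable `t = -x²` the bracket is `4 (t P'' + (g + 1/2 - t) P' + v P)`, which vanishes.
-/

open Real Filter Topology

section

variable {𝕜 : Type*} [NontriviallyNormedField 𝕜]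

theorem deriv_deriv_mul_eq {w u w' u' : 𝕜 → 𝕜} {x w'' u'' : 𝕜}
    (hw : ∀ᶠ y in 𝓝 x, HasDerivAt w (w' y) y) (hu : ∀ᶠ y in 𝓝 x, HasDerivAt u (u' y) y)
    (hw' : HasDerivAt w' w'' x) (hu' : HasDerivAt u' u'' x) :
    deriv (deriv fun y => w y * u y) x = w'' * u x + 2 * (w' x * u' x) + w x * u'' := by
  have hderiv : deriv (fun y => w y * u y) =ᶠ[𝓝 x] fun y => w' y * u y + w y * u' y := by
    filter_upwards [hw, hu] with y hwy huy using (hwy.mul huy).deriv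
  have hsum : HasDerivAt (fun y => w' y * u y + w y * u' y)
      (w'' * u x + w' x * u' x + (w' x * u' x + w x * u'')) x :=
    (hw'.mul hu.self_of_nhds).add (hw.self_of_nhds.mul hu')
  rw [hderiv.deriv_eq, hsum.deriv]
  ring

theorem hasDerivAt_comp_neg_sq {f : 𝕜 → 𝕜} {f' y : 𝕜} (hf : HasDerivAt f f' (-(y ^ 2))) :
    HasDerivAt (fun z => f (-(z ^ 2))) (-2 * y * f') y := by
  refine (hf.comp y (hasDerivAt_pow 2 y).neg).congr_deriv ?_
  push_cast
  ring

end

theorem hasDerivAt_exp_sq_mul_rpow (g : ℝ) {y : ℝ} (hy : 0 < y) :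
    HasDerivAt (fun z => exp (z ^ 2 / 2) * z ^ g) ((y + g / y) * (exp (y ^ 2 / 2) * y ^ g)) y := by
  have hexp : HasDerivAt (fun z => exp (z ^ 2 / 2)) (exp (y ^ 2 / 2) * y) y := by
    refine ((hasDerivAt_pow 2 y).div_const 2).exp.congr_deriv ?_
    push_cast
    ring
  refine (hexp.mul (hasDerivAt_rpow_const (p := g) (Or.inl hy.ne'))).congr_deriv ?_
  rw [rpow_sub_one hy.ne']
  field_simp

theorem hasDerivAt_deriv_exp_sq_mul_rpow (g : ℝ) {y : ℝ} (hy : 0 < y) :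
    HasDerivAt (fun z => (z + g / z) * (exp (z ^ 2 / 2) * z ^ g))
      ((1 - g / y ^ 2 + (y + g / y) ^ 2) * (exp (y ^ 2 / 2) * y ^ g)) y := by
  have hlog : HasDerivAt (fun z => z + g / z) (1 - g / y ^ 2) y := by
    refine ((hasDerivAt_id y).add ((hasDerivAt_inv hy.ne').const_mul g)).congr_deriv ?_
    field_simp
    ring
  refine (hlog.mul (hasDerivAt_exp_sq_mul_rpow g hy)).congr_deriv ?_
  ring

theorem radialOscillator_virtualState_eigen {g v : ℝ} {P : ℝ → ℝ} (hP : Differentiable ℝ P)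
    (hP' : Differentiable ℝ (deriv P))
    (hode : ∀ t : ℝ, t * deriv (deriv P) t + (g + 1 / 2 - t) * deriv P t + v * P t = 0)
    {x : ℝ} (hx : 0 < x) :
    -(deriv (deriv (fun y => exp (y ^ 2 / 2) * y ^ g * P (-(y ^ 2)))) x)
        + (x ^ 2 + g * (g - 1) / x ^ 2 - 1 - 2 * g) * (exp (x ^ 2 / 2) * x ^ g * P (-(x ^ 2)))
      = -4 * (g + v + 1 / 2) * (exp (x ^ 2 / 2) * x ^ g * P (-(x ^ 2))) := by
  have hw : ∀ᶠ y in 𝓝 x, HasDerivAt (fun z => exp (z ^ 2 / 2) * z ^ g)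
      ((y + g / y) * (exp (y ^ 2 / 2) * y ^ g)) y := by
    filter_upwards [Ioi_mem_nhds hx] with y hy using hasDerivAt_exp_sq_mul_rpow g hy
  have hu : ∀ y, HasDerivAt (fun z => P (-(z ^ 2))) (-2 * y * deriv P (-(y ^ 2))) y :=
    fun y => hasDerivAt_comp_neg_sq (hP _).hasDerivAt
  have hu' : HasDerivAt (fun z => -2 * z * deriv P (-(z ^ 2)))
      (-2 * deriv P (-(x ^ 2)) + -2 * x * (-2 * x * deriv (deriv P) (-(x ^ 2)))) x := by
    refine (((hasDerivAt_id x).const_mul (-2)).mul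
      (hasDerivAt_comp_neg_sq (hP' _).hasDerivAt)).congr_deriv ?_
    simp only [id]
    ring
  rw [deriv_deriv_mul_eq hw (.of_forall hu) (hasDerivAt_deriv_exp_sq_mul_rpow g hx) hu']
  field_simp
  linear_combination (8 * x ^ 2) * hode (-(x ^ 2))

/-- Type I virtual state wavefunction of the radial oscillator: if the polynomial `P` satisfies
the Laguerre differential equation `t P'' + (g + 1/2 - t) P' + v P = 0`, then
`φ̃(x) = e^{x²/2} x^g P(-x²)` satisfies the radial-oscillator Schrödinger equation
`-φ̃'' + (x² + g(g-1)/x² - 1 - 2g) φ̃ = -4(g + v + 1/2) φ̃` on `(0, ∞)`. -/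
theorem stmt_18 (g : ℝ) (v : ℕ) (P : ℝ → ℝ)
    (hpoly : ∃ p : Polynomial ℝ, P = fun t => p.eval t)
    (hode : ∀ t : ℝ,
      t * deriv (deriv P) t + (g + 1 / 2 - t) * deriv P t + (v : ℝ) * P t = 0) :
    ∀ x ∈ Set.Ioi (0 : ℝ),
      -(deriv (deriv (fun y => Real.exp (y ^ 2 / 2) * y ^ g * P (-(y ^ 2)))) x)
        + (x ^ 2 + g * (g - 1) / x ^ 2 - 1 - 2 * g)
          * (Real.exp (x ^ 2 / 2) * x ^ g * P (-(x ^ 2)))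
      = -4 * (g + (v : ℝ) + 1 / 2) * (Real.exp (x ^ 2 / 2) * x ^ g * P (-(x ^ 2))) := by
  obtain ⟨p, rfl⟩ := hpoly
  have hderiv : deriv (fun t => p.eval t) = fun t => p.derivative.eval t :=
    funext fun t => p.deriv
  have hP' : Differentiable ℝ (deriv fun t => p.eval t) := hderiv ▸ p.derivative.differentiable
  exact fun x hx => radialOscillator_virtualState_eigen p.differentiable hP' hode hx
end
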